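/- arXiv:nlin/0301010 — 11 statements merged into one kernel-verified Lean document; each statement's English description precedes it below -/
import Mathlib

section
/- Let N ≥ 2 and let U = I₁ × ⋯ × I_N ⊆ ℝ^N be an open box (a product of open intervals). Let c_k : U → ℝ (indexed by k ∈ ℤ) and V₁, …, V_N : U → ℝ be smooth functions such that: (i) for every k ∈ ℤ and every i ∈ {1,…,N}, ∂_i c_{k+1} = (V_i + c₁) ∂_i c_k on U; (ii) ∂_i c₁ vanishes nowhere on U for every i; (iii) for all i ≠ j and all r ∈ U, V_i(r) + c₁(r) ≠ V_j(r) + c₁(r). Then there exist smooth one-variable functions f_i : I_i → ℝ and ψ_i : I_i → ℝ (i = 1,…,N) such that for all r ∈ U: c₁(r) = Σ_{m=1}^N ψ_m(r_m) and V_i(r) = f_i(r_i) − Σ_{m=1}^N ψ_m(r_m). -/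
open Real Set

/-- Partial derivative of `f : (Fin N → ℝ) → ℝ` in the `i`-th coordinate at `r`. -/
noncomputable def pd {N : ℕ} (i : Fin N) (f : (Fin N → ℝ) → ℝ) (r : Fin N → ℝ) : ℝ :=
  deriv (fun s => f (Function.update r i s)) (r i)

/-!
Write `λᵢ = Vᵢ + c₁`, so that `∂ᵢ c_{k+1} = λᵢ ∂ᵢ c_k`. Differentiating this in `r_j` (`j ≠ i`)
and comparing with the same relation for `j` via `∂ᵢ∂ⱼ = ∂ⱼ∂ᵢ`, the mixed derivatives
`a_k = ∂ᵢ∂ⱼ c_k` satisfy two recursions, one with ratio `λᵢ` and one with ratio `λⱼ`. As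
`λᵢ ≠ λⱼ`, this forces `∂ᵢ∂ⱼ c₁ = 0` and `∂ᵢ c₁ ∂ⱼ λᵢ = 0`, hence `∂ⱼ λᵢ = 0`.
On a box, vanishing mixed derivatives make `c₁` a sum of functions of one variable each, and
`∂ⱼ λᵢ = 0` makes `λᵢ` a function of `rᵢ` alone.
-/

open Function

section Box

variable {ι : Type*} [DecidableEq ι] {s : ι → Set ℝ} {g : (ι → ℝ) → ℝ}

theorem hasDerivAt_comp_update [Fintype ι] {x : ι → ℝ} (i : ι) (hg : DifferentiableAt ℝ g x) :
    HasDerivAt (fun t => g (update x i t)) (fderiv ℝ g x (Pi.single i 1)) (x i) := by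
  have hg' : HasFDerivAt g (fderiv ℝ g x) (update x i (x i)) := by
    rw [update_eq_self]
    exact hg.hasFDerivAt
  exact hg'.comp_hasDerivAt (x i) (hasDerivAt_update x i (x i))

theorem contDiffOn_comp_update [Fintype ι] {n : WithTop ℕ∞} (hg : ContDiffOn ℝ n g (univ.pi s))
    {p : ι → ℝ} (hp : p ∈ univ.pi s) (i : ι) :
    ContDiffOn ℝ n (fun t => g (update p i t)) (s i) :=
  hg.comp (contDiff_update n p i).contDiffOn
    fun _ ht => (update_mem_pi_iff_of_mem hp).2 fun _ => ht

theorem apply_update_eq_of_hasDerivAt_zero {j : ι} (hoj : IsOpen (s j))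
    (hcj : IsPreconnected (s j))
    (hg : ∀ x ∈ univ.pi s, HasDerivAt (fun t => g (update x j t)) 0 (x j))
    {x : ι → ℝ} (hx : x ∈ univ.pi s) {t : ℝ} (ht : t ∈ s j) :
    g (update x j t) = g x := by
  have hderiv : ∀ u ∈ s j, HasDerivAt (fun t => g (update x j t)) 0 u := fun u hu => by
    simpa using hg _ ((update_mem_pi_iff_of_mem hx).2 fun _ => hu)
  simpa using hoj.is_const_of_deriv_eq_zero hcj
    (fun u hu => (hderiv u hu).differentiableAt.differentiableWithinAt)
    (fun u hu => (hderiv u hu).deriv) ht (hx j trivial)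

theorem apply_eq_of_hasDerivAt_zero (ho : ∀ i, IsOpen (s i)) (hc : ∀ i, IsPreconnected (s i))
    (S : Finset ι) (hg : ∀ j ∈ S, ∀ x ∈ univ.pi s, HasDerivAt (fun t => g (update x j t)) 0 (x j))
    {x y : ι → ℝ} (hx : x ∈ univ.pi s) (hy : y ∈ univ.pi s) (hxy : ∀ j ∉ S, x j = y j) :
    g x = g y := by
  induction S using Finset.induction generalizing x with
  | empty => exact congrArg g (funext fun j => hxy j (Finset.notMem_empty j))
  | @insert j S hjS ih =>
    have hx' : update x j (y j) ∈ univ.pi s :=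
      (update_mem_pi_iff_of_mem hx).2 fun _ => hy j trivial
    rw [← apply_update_eq_of_hasDerivAt_zero (ho j) (hc j) (hg j (S.mem_insert_self j)) hx
      (hy j trivial)]
    refine ih (fun k hk => hg k (Finset.mem_insert_of_mem hk)) hx' fun k hk => ?_
    by_cases hkj : k = j
    · subst hkj
      simp
    · rw [update_of_ne hkj]
      exact hxy k (by simp [hkj, hk])

theorem eq_sum_apply_update_of_hasDerivAt [Fintype ι] (ho : ∀ i, IsOpen (s i))
    (hc : ∀ i, IsPreconnected (s i)) {D : ι → ℝ → ℝ}
    (hg : ∀ i, ∀ x ∈ univ.pi s, HasDerivAt (fun t => g (update x i t)) (D i (x i)) (x i))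
    {p x : ι → ℝ} (hp : p ∈ univ.pi s) (hx : x ∈ univ.pi s) :
    g x = ∑ i, g (update p i (x i)) - (Fintype.card ι - 1) * g p := by
  have hsum : ∀ j, ∀ y ∈ univ.pi s,
      HasDerivAt (fun t => ∑ i, g (update p i (update y j t i))) (D j (y j)) (y j) := by
    intro j y hy
    rw [← Fintype.sum_pi_single' j (D j (y j))]
    refine HasDerivAt.fun_sum fun i _ => ?_
    by_cases hij : i = j
    · subst hij
      simpa using hg i _ ((update_mem_pi_iff_of_mem hp).2 fun _ => hy i trivial)
    · simpa [update_of_ne hij, Pi.single_apply, hij] using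
        hasDerivAt_const (y j) (g (update p i (y i)))
  have := apply_eq_of_hasDerivAt_zero (g := fun y => g y - ∑ i, g (update p i (y i))) ho hc
    Finset.univ (fun j _ y hy => by simpa using (hg j y hy).fun_sub (hsum j y hy)) hx hp (by simp)
  simp only [update_eq_self, Finset.sum_const, Finset.card_univ, nsmul_eq_mul] at this
  linarith

theorem apply_eq_of_fderiv_apply_single_eq_zero [Fintype ι] (ho : ∀ i, IsOpen (s i))
    (hc : ∀ i, IsPreconnected (s i)) {i : ι} (hg : DifferentiableOn ℝ g (univ.pi s))
    (hg' : ∀ x ∈ univ.pi s, ∀ j ≠ i, fderiv ℝ g x (Pi.single j 1) = 0)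
    {x y : ι → ℝ} (hx : x ∈ univ.pi s) (hy : y ∈ univ.pi s) (hxy : x i = y i) : g x = g y := by
  have hbox : IsOpen (univ.pi s) := isOpen_set_pi finite_univ fun i _ => ho i
  refine apply_eq_of_hasDerivAt_zero ho hc (Finset.univ.erase i) (fun j hj z hz => ?_) hx hy ?_
  · simpa [hg' z hz j (Finset.ne_of_mem_erase hj)] using
      hasDerivAt_comp_update j ((hg z hz).differentiableAt (hbox.mem_nhds hz))
  · intro j hj
    obtain rfl : j = i := by simpa using hj
    exact hxy

theorem eq_sum_apply_update_of_fderiv_fderiv_eq_zero [Fintype ι] (ho : ∀ i, IsOpen (s i))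
    (hc : ∀ i, IsPreconnected (s i)) (hg : ContDiffOn ℝ 2 g (univ.pi s))
    (hg' : ∀ x ∈ univ.pi s, ∀ i j, i ≠ j →
      fderiv ℝ (fderiv ℝ g) x (Pi.single j 1) (Pi.single i 1) = 0)
    {p x : ι → ℝ} (hp : p ∈ univ.pi s) (hx : x ∈ univ.pi s) :
    g x = ∑ i, g (update p i (x i)) - (Fintype.card ι - 1) * g p := by
  have hbox : IsOpen (univ.pi s) := isOpen_set_pi finite_univ fun i _ => ho i
  have hgd : ∀ y ∈ univ.pi s, DifferentiableAt ℝ g y := fun y hy =>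
    (hg.differentiableOn two_ne_zero).differentiableAt (hbox.mem_nhds hy)
  have hg'd : ∀ y ∈ univ.pi s, DifferentiableAt ℝ (fderiv ℝ g) y := fun y hy =>
    ((hg.contDiffAt (hbox.mem_nhds hy)).fderiv_right (m := 1) le_rfl).differentiableAt one_ne_zero
  refine eq_sum_apply_update_of_hasDerivAt ho hc
    (D := fun i t => fderiv ℝ g (update p i t) (Pi.single i 1)) (fun i y hy => ?_) hp hx
  have hpy : update p i (y i) ∈ univ.pi s :=
    (update_mem_pi_iff_of_mem hp).2 fun _ => hy i trivial
  convert hasDerivAt_comp_update i (hgd y hy) using 1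
  refine apply_eq_of_fderiv_apply_single_eq_zero ho hc
    (fun z hz => ((hg'd z hz).clm_apply (differentiableAt_const _)).differentiableWithinAt)
    (fun z hz j hji => ?_) hpy hy (update_self i _ p)
  rw [fderiv_clm_apply (hg'd z hz) (differentiableAt_const _)]
  simpa using hg' z hz i j hji.symm

end Box

theorem pd_eq_fderiv_apply_single {N : ℕ} {g : (Fin N → ℝ) → ℝ} {x : Fin N → ℝ} (i : Fin N)
    (hg : DifferentiableAt ℝ g x) : pd i g x = fderiv ℝ g x (Pi.single i 1) :=
  (hasDerivAt_comp_update i hg).deriv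

/-- With `X = p 1 * A` and `Y = q 1 * B` the recursions solve to
`a (k + 1) = μ ^ k a 1 + k μ ^ (k - 1) X = ν ^ k a 1 + k ν ^ (k - 1) Y`;
for `μ ≠ ν`, comparing `k = 1, 2, 3` leaves only the zero solution. -/
theorem eq_zero_of_two_recursions {μ ν A B : ℝ} {a p q : ℤ → ℝ} (hμν : μ ≠ ν)
    (ha : ∀ k, a (k + 1) = μ * a k + p k * A) (ha' : ∀ k, a (k + 1) = ν * a k + q k * B)
    (hp : ∀ k, p (k + 1) = μ * p k) (hq : ∀ k, q (k + 1) = ν * q k) :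
    a 1 = 0 ∧ p 1 * A = 0 := by
  have h₂ := ha 1; have h₃ := ha 2; have h₄ := ha 3
  have h₂' := ha' 1; have h₃' := ha' 2; have h₄' := ha' 3
  have p₂ := hp 1; have p₃ := hp 2; have q₂ := hq 1; have q₃ := hq 2
  simp only [Int.reduceAdd] at h₂ h₃ h₄ h₂' h₃' h₄' p₂ p₃ q₂ q₃
  set X := p 1 * A
  set Y := q 1 * B
  have c₃ : a 3 = μ ^ 2 * a 1 + 2 * μ * X := by linear_combination h₃ + μ * h₂ + A * p₂
  have c₃' : a 3 = ν ^ 2 * a 1 + 2 * ν * Y := by linear_combination h₃' + ν * h₂' + B * q₂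
  have c₄ : a 4 = μ ^ 3 * a 1 + 3 * μ ^ 2 * X := by
    linear_combination h₄ + μ * c₃ + A * (p₃ + μ * p₂)
  have c₄' : a 4 = ν ^ 3 * a 1 + 3 * ν ^ 2 * Y := by
    linear_combination h₄' + ν * c₃' + B * (q₃ + ν * q₂)
  have hd : μ - ν ≠ 0 := sub_ne_zero.2 hμν
  have hY : Y = X + (μ - ν) * a 1 := by linear_combination h₂ - h₂'
  have hX : 2 * X + (μ - ν) * a 1 = 0 :=
    (mul_eq_zero.1 (by linear_combination c₃' - c₃ + 2 * ν * hY)).resolve_left hd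
  have ha₁ : a 1 = 0 := by
    refine (mul_eq_zero.1 (?_ : (μ - ν) ^ 3 * a 1 = 0)).resolve_left (pow_ne_zero 3 hd)
    linear_combination -2 * (c₄' - c₄ + 3 * ν ^ 2 * hY) + 3 * (μ + ν) * (μ - ν) * hX
  exact ⟨ha₁, by linear_combination hX / 2 - (μ - ν) * ha₁ / 2⟩

section Chain

variable {E : Type*} [NormedAddCommGroup E] [NormedSpace ℝ E] {U : Set E}

theorem fderiv_fderiv_apply_of_fderiv_apply_eq_mul (hU : IsOpen U) {g h μ : E → ℝ} {v : E}
    (hchain : ∀ x ∈ U, fderiv ℝ h x v = μ x * fderiv ℝ g x v) {x : E} (hx : x ∈ U)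
    (hh : DifferentiableAt ℝ (fderiv ℝ h) x) (hg : DifferentiableAt ℝ (fderiv ℝ g) x)
    (hμ : DifferentiableAt ℝ μ x) (w : E) :
    fderiv ℝ (fderiv ℝ h) x w v
      = μ x * fderiv ℝ (fderiv ℝ g) x w v + fderiv ℝ g x v * fderiv ℝ μ x w := by
  have hloc : (fun y => fderiv ℝ h y v) =ᶠ[nhds x] fun y => μ y * fderiv ℝ g y v :=
    Filter.eventually_of_mem (hU.mem_nhds hx) hchain
  have := congrArg (· w) <|
    hloc.fderiv_eq.trans (fderiv_fun_mul hμ (hg.clm_apply (differentiableAt_const v)))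
  simpa [fderiv_clm_apply hh (differentiableAt_const v),
    fderiv_clm_apply hg (differentiableAt_const v)] using this

theorem fderiv_fderiv_eq_zero_of_chain (hU : IsOpen U) {g : ℤ → E → ℝ}
    (hg : ∀ k, ContDiffOn ℝ 2 (g k) U) {μ ν : E → ℝ} {v w : E}
    (hμ : ∀ k, ∀ x ∈ U, fderiv ℝ (g (k + 1)) x v = μ x * fderiv ℝ (g k) x v)
    (hν : ∀ k, ∀ x ∈ U, fderiv ℝ (g (k + 1)) x w = ν x * fderiv ℝ (g k) x w)
    {x : E} (hx : x ∈ U) (hμx : DifferentiableAt ℝ μ x) (hνx : DifferentiableAt ℝ ν x)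
    (hμν : μ x ≠ ν x) (hv : fderiv ℝ (g 1) x v ≠ 0) :
    fderiv ℝ (fderiv ℝ (g 1)) x w v = 0 ∧ fderiv ℝ μ x w = 0 := by
  have hgx : ∀ k, ContDiffAt ℝ 2 (g k) x := fun k => (hg k).contDiffAt (hU.mem_nhds hx)
  have hdg : ∀ k, DifferentiableAt ℝ (fderiv ℝ (g k)) x := fun k =>
    ((hgx k).fderiv_right (m := 1) le_rfl).differentiableAt one_ne_zero
  have hsym : ∀ k, fderiv ℝ (fderiv ℝ (g k)) x v w = fderiv ℝ (fderiv ℝ (g k)) x w v :=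
    fun k => (hgx k).isSymmSndFDerivAt (by simp) v w
  have hv_rec : ∀ k, fderiv ℝ (fderiv ℝ (g (k + 1))) x w v
      = μ x * fderiv ℝ (fderiv ℝ (g k)) x w v + fderiv ℝ (g k) x v * fderiv ℝ μ x w :=
    fun k => fderiv_fderiv_apply_of_fderiv_apply_eq_mul hU (hμ k) hx (hdg _) (hdg k) hμx w
  have hw_rec : ∀ k, fderiv ℝ (fderiv ℝ (g (k + 1))) x w v
      = ν x * fderiv ℝ (fderiv ℝ (g k)) x w v + fderiv ℝ (g k) x w * fderiv ℝ ν x v := fun k => by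
    rw [← hsym, ← hsym]
    exact fderiv_fderiv_apply_of_fderiv_apply_eq_mul hU (hν k) hx (hdg _) (hdg k) hνx v
  obtain ⟨ha, hX⟩ := eq_zero_of_two_recursions (a := fun k => fderiv ℝ (fderiv ℝ (g k)) x w v)
    (p := fun k => fderiv ℝ (g k) x v) (q := fun k => fderiv ℝ (g k) x w) hμν hv_rec hw_rec
    (hμ · x hx) (hν · x hx)
  exact ⟨ha, (mul_eq_zero.1 hX).resolve_left hv⟩

end Chain

theorem fderiv_fderiv_eq_zero_of_reduction {N : ℕ} {U : Set (Fin N → ℝ)} (hU : IsOpen U)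
    {c : ℤ → (Fin N → ℝ) → ℝ} {V : Fin N → (Fin N → ℝ) → ℝ}
    (hc : ∀ k, ContDiffOn ℝ 2 (c k) U) (hV : ∀ i, DifferentiableOn ℝ (V i) U)
    (hchain : ∀ k i, ∀ r ∈ U, pd i (c (k + 1)) r = (V i r + c 1 r) * pd i (c k) r)
    (hnz : ∀ i, ∀ r ∈ U, pd i (c 1) r ≠ 0)
    (hdist : ∀ i j, i ≠ j → ∀ r ∈ U, V i r + c 1 r ≠ V j r + c 1 r)
    {i j : Fin N} (hij : i ≠ j) {r : Fin N → ℝ} (hr : r ∈ U) :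
    fderiv ℝ (fderiv ℝ (c 1)) r (Pi.single j 1) (Pi.single i 1) = 0 ∧
      fderiv ℝ (fun x => V i x + c 1 x) r (Pi.single j 1) = 0 := by
  have hcd : ∀ k, ∀ x ∈ U, DifferentiableAt ℝ (c k) x := fun k x hx =>
    ((hc k).differentiableOn two_ne_zero).differentiableAt (hU.mem_nhds hx)
  have hvd : ∀ i, DifferentiableAt ℝ (fun x => V i x + c 1 x) r := fun i =>
    ((hV i).differentiableAt (hU.mem_nhds hr)).add (hcd 1 r hr)
  have hchain' : ∀ i k, ∀ x ∈ U, fderiv ℝ (c (k + 1)) x (Pi.single i 1)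
      = (V i x + c 1 x) * fderiv ℝ (c k) x (Pi.single i 1) := fun i k x hx => by
    rw [← pd_eq_fderiv_apply_single i (hcd _ x hx), ← pd_eq_fderiv_apply_single i (hcd k x hx)]
    exact hchain k i x hx
  refine fderiv_fderiv_eq_zero_of_chain hU hc (hchain' i) (hchain' j) hr (hvd i) (hvd j)
    (hdist i j hij r hr) ?_
  rw [← pd_eq_fderiv_apply_single i (hcd 1 r hr)]
  exact hnz i r hr

/-- If smooth moments `c k` (k ∈ ℤ) on an open box `U = I₁ × ⋯ × I_N` satisfy
`∂ᵢ c_{k+1} = (Vᵢ + c₁) ∂ᵢ c_k`, with `∂ᵢ c₁` nowhere vanishing and the shifted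
velocities pairwise distinct, then `c₁(r) = Σ ψ_m(r_m)` and
`V i r = f i (r i) − Σ ψ_m (r_m)` for smooth one-variable functions `f_i, ψ_i`. -/
theorem reduction_velocities_structure
    (N : ℕ) (hN : 2 ≤ N) (α β : Fin N → ℝ) (hαβ : ∀ i, α i < β i)
    (U : Set (Fin N → ℝ)) (hU : U = {r | ∀ i, r i ∈ Set.Ioo (α i) (β i)})
    (c : ℤ → (Fin N → ℝ) → ℝ) (V : Fin N → (Fin N → ℝ) → ℝ)
    (hc : ∀ k : ℤ, ContDiffOn ℝ (⊤ : ℕ∞) (c k) U)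
    (hV : ∀ i, ContDiffOn ℝ (⊤ : ℕ∞) (V i) U)
    (hchain : ∀ k : ℤ, ∀ i : Fin N, ∀ r ∈ U,
      pd i (c (k + 1)) r = (V i r + c 1 r) * pd i (c k) r)
    (hnz : ∀ i : Fin N, ∀ r ∈ U, pd i (c 1) r ≠ 0)
    (hdist : ∀ i j : Fin N, i ≠ j → ∀ r ∈ U, V i r + c 1 r ≠ V j r + c 1 r) :
    ∃ f ψ : Fin N → ℝ → ℝ,
      (∀ i, ContDiffOn ℝ (⊤ : ℕ∞) (f i) (Set.Ioo (α i) (β i))) ∧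
      (∀ i, ContDiffOn ℝ (⊤ : ℕ∞) (ψ i) (Set.Ioo (α i) (β i))) ∧
      (∀ r ∈ U, c 1 r = ∑ m, ψ m (r m)) ∧
      (∀ i : Fin N, ∀ r ∈ U, V i r = f i (r i) - ∑ m, ψ m (r m)) := by
  obtain rfl : U = univ.pi fun i => Ioo (α i) (β i) := by rw [hU]; ext; simp
  set U := univ.pi fun i => Ioo (α i) (β i)
  have ho : ∀ i, IsOpen (Ioo (α i) (β i)) := fun _ => isOpen_Ioo
  have hpc : ∀ i, IsPreconnected (Ioo (α i) (β i)) := fun _ => isPreconnected_Ioo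
  have hc2 : ∀ k, ContDiffOn ℝ 2 (c k) U := fun k => (hc k).of_le (WithTop.coe_le_coe.2 le_top)
  have hvel : ∀ i, ContDiffOn ℝ (⊤ : ℕ∞) (fun x => V i x + c 1 x) U := fun i => (hV i).add (hc 1)
  have hmixed := fun i j (hij : i ≠ j) x (hx : x ∈ U) =>
    fderiv_fderiv_eq_zero_of_reduction (isOpen_set_pi finite_univ fun i _ => ho i) hc2
      (fun i => (hV i).differentiableOn (by simp)) hchain hnz hdist hij hx
  obtain ⟨p, hp⟩ : U.Nonempty := univ_pi_nonempty_iff.2 fun i => nonempty_Ioo.2 (hαβ i)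
  have hc₁ : ∀ x ∈ U, c 1 x = ∑ m, (c 1 (update p m (x m)) - (N - 1) / N * c 1 p) := by
    intro x hx
    have hN0 : (N : ℝ) ≠ 0 := Nat.cast_ne_zero.2 (by omega)
    rw [eq_sum_apply_update_of_fderiv_fderiv_eq_zero ho hpc (hc2 1)
      (fun y hy i j hij => (hmixed i j hij y hy).1) hp hx, Finset.sum_sub_distrib]
    simp only [Finset.sum_const, Finset.card_univ, Fintype.card_fin, nsmul_eq_mul, sub_right_inj]
    field_simp
  have hvel_eq : ∀ i, ∀ x ∈ U,
      V i x + c 1 x = V i (update p i (x i)) + c 1 (update p i (x i)) := fun i x hx =>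
    apply_eq_of_fderiv_apply_single_eq_zero ho hpc ((hvel i).differentiableOn (by simp))
      (fun y hy j hji => (hmixed i j hji.symm y hy).2) hx
      ((update_mem_pi_iff_of_mem hp).2 fun _ => hx i trivial) (update_self i (x i) p).symm
  refine ⟨fun i t => V i (update p i t) + c 1 (update p i t),
    fun i t => c 1 (update p i t) - (N - 1) / N * c 1 p,
    fun i => contDiffOn_comp_update (hvel i) hp i,
    fun i => (contDiffOn_comp_update (hc 1) hp i).sub contDiffOn_const, hc₁,
    fun i x hx => by linarith [hvel_eq i x hx, hc₁ x hx]⟩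
end

section
/- Let N ≥ 2, let f_i, ψ_i : ℝ → ℝ (i = 1,…,N) be smooth with ψ'_i nowhere zero, and let U ⊆ ℝ^N be open with f_i(r_i) ≠ f_k(r_k) for all r ∈ U and all i ≠ k. Suppose h̃ : U → ℝ is smooth and satisfies, for all i ≠ k and all r ∈ U, ∂_i∂_k h̃ = −[ψ'_k(r_k)/(f_i(r_i) − f_k(r_k))] ∂_i h̃ + [ψ'_i(r_i)/(f_i(r_i) − f_k(r_k))] ∂_k h̃. Define w^i(r) := (1/ψ'_i(r_i)) ∂_i h̃(r). Then for all i ≠ k and all r ∈ U: ∂_i w^k = −[ψ'_i(r_i)/(f_i(r_i) − f_k(r_k))] (w^i − w^k). -/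
open Real Set

/-- The differential substitution `wⁱ = (1/ψ'ᵢ) ∂ᵢ h̃` carries solutions of the adjoint
linear second-order system to solutions of Tsarev's equations
`∂ᵢ wᵏ = −[ψ'ᵢ/(fᵢ − f_k)] (wⁱ − wᵏ)`. -/
theorem commuting_flow_substitution
    (N : ℕ) (hN : 2 ≤ N) (f ψ : Fin N → ℝ → ℝ)
    (hf : ∀ i, ContDiff ℝ (⊤ : ℕ∞) (f i)) (hψ : ∀ i, ContDiff ℝ (⊤ : ℕ∞) (ψ i))
    (hψ' : ∀ (i : Fin N) (s : ℝ), deriv (ψ i) s ≠ 0)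
    (U : Set (Fin N → ℝ)) (hUopen : IsOpen U)
    (hsep : ∀ r ∈ U, ∀ i k : Fin N, i ≠ k → f i (r i) ≠ f k (r k))
    (ht : (Fin N → ℝ) → ℝ) (hht : ContDiffOn ℝ (⊤ : ℕ∞) ht U)
    (hsys : ∀ i k : Fin N, i ≠ k → ∀ r ∈ U,
      pd i (fun r' => pd k ht r') r
        = -(deriv (ψ k) (r k) / (f i (r i) - f k (r k))) * pd i ht r
          + (deriv (ψ i) (r i) / (f i (r i) - f k (r k))) * pd k ht r)
    (w : Fin N → (Fin N → ℝ) → ℝ)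
    (hw : ∀ (i : Fin N) (r : Fin N → ℝ), w i r = (1 / deriv (ψ i) (r i)) * pd i ht r) :
    ∀ i k : Fin N, i ≠ k → ∀ r ∈ U,
      pd i (w k) r
        = -(deriv (ψ i) (r i) / (f i (r i) - f k (r k))) * (w i r - w k r) := by
  intro i k hik r hr
  have hk : k ≠ i := Ne.symm hik
  have h1 : pd i (w k) r = (1 / deriv (ψ k) (r k)) * pd i (fun r' => pd k ht r') r := by
    unfold pd
    have heq : (fun s => w k (Function.update r i s))
        = fun s => (1 / deriv (ψ k) (r k)) * pd k ht (Function.update r i s) := by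
      funext s
      rw [hw, Function.update_of_ne hk]
    rw [heq, deriv_const_mul_field]; rfl
  rw [h1, hsys i k hik r hr, hw, hw]
  have hfd : f i (r i) - f k (r k) ≠ 0 := sub_ne_zero.mpr (hsep r hr i k hik)
  have hψi := hψ' i (r i)
  have hψk := hψ' k (r k)
  field_simp
  ring
end

section
/- Let c_k : ℝ² → ℝ (k ∈ ℤ) be smooth functions of (x,t) with c₀ nowhere zero, satisfying the hydrodynamic chain ∂_t c_k = c₁ ∂_x c_k − c₀ ∂_x c_{k+1} for every k ∈ ℤ. Suppose z : ℝ² → ℝ is smooth with ∂_x z = 1/c₀ and ∂_t z = c₁/c₀, and suppose c̃_k : ℝ² → ℝ (k ∈ ℤ) are smooth functions of (z,y) with c̃_k(z(x,t), t) = c_k(x,t) for all (x,t). Then for every k ∈ ℤ and every (x,t): (∂_y c̃_k + ∂_z c̃_{k+1})(z(x,t), t) = 0, i.e., in the new independent variables (z,y) the chain linearizes to ∂_y c_k + ∂_z c_{k+1} = 0. -/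
/-!
Along the new coordinates, the chain rule gives `∂ₓ c_k = (∂ₓ z) ∂_z c̃_k = ∂_z c̃_k / c₀` and
`∂ₜ c_k = (∂ₜ z) ∂_z c̃_k + ∂_y c̃_k = (c₁ / c₀) ∂_z c̃_k + ∂_y c̃_k`. Substituting into the chain,
the terms `c₁ ∂_z c̃_k / c₀` cancel and what remains is `∂_y c̃_k = -∂_z c̃_{k+1}`.
-/

open Real Set

/-- Partial derivative in the first variable. -/
noncomputable def pdx (f : ℝ → ℝ → ℝ) (x t : ℝ) : ℝ := deriv (fun x' => f x' t) x

/-- Partial derivative in the second variable. -/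
noncomputable def pdt (f : ℝ → ℝ → ℝ) (x t : ℝ) : ℝ := deriv (fun t' => f x t') t

open Function

section PartialDerivatives

variable {F : ℝ → ℝ → ℝ} {L : ℝ × ℝ →L[ℝ] ℝ} {x t : ℝ}

theorem HasFDerivAt.hasDerivAt_uncurry_left (hF : HasFDerivAt (uncurry F) L (x, t)) :
    HasDerivAt (fun x' => F x' t) (L (1, 0)) x :=
  hF.comp_hasDerivAt (f := fun x' => (x', t)) x
    ((hasDerivAt_id x).prodMk (hasDerivAt_const x t))

theorem HasFDerivAt.hasDerivAt_uncurry_right (hF : HasFDerivAt (uncurry F) L (x, t)) :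
    HasDerivAt (fun t' => F x t') (L (0, 1)) t :=
  hF.comp_hasDerivAt (f := fun t' => (x, t')) t
    ((hasDerivAt_const t x).prodMk (hasDerivAt_id t))

theorem hasDerivAt_pdx (hF : DifferentiableAt ℝ (uncurry F) (x, t)) :
    HasDerivAt (fun x' => F x' t) (pdx F x t) x := by
  have h := hF.hasFDerivAt.hasDerivAt_uncurry_left
  rwa [pdx, h.deriv]

theorem hasDerivAt_pdt (hF : DifferentiableAt ℝ (uncurry F) (x, t)) :
    HasDerivAt (fun t' => F x t') (pdt F x t) t := by
  have h := hF.hasFDerivAt.hasDerivAt_uncurry_right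
  rwa [pdt, h.deriv]

theorem DifferentiableAt.hasDerivAt_uncurry_comp {u v : ℝ → ℝ} {u' v' s : ℝ}
    (hF : DifferentiableAt ℝ (uncurry F) (u s, v s))
    (hu : HasDerivAt u u' s) (hv : HasDerivAt v v' s) :
    HasDerivAt (fun r => F (u r) (v r))
      (u' * pdx F (u s) (v s) + v' * pdt F (u s) (v s)) s := by
  have hL := hF.hasFDerivAt
  have hsplit : (u', v') = u' • ((1 : ℝ), (0 : ℝ)) + v' • ((0 : ℝ), (1 : ℝ)) := by simp
  rw [pdx, pdt, hL.hasDerivAt_uncurry_left.deriv, hL.hasDerivAt_uncurry_right.deriv,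
    ← smul_eq_mul, ← smul_eq_mul, ← map_smul, ← map_smul, ← map_add, ← hsplit]
  exact hL.comp_hasDerivAt s (hu.prodMk hv)

end PartialDerivatives

section ChangeOfVariables

variable {f g z : ℝ → ℝ → ℝ} {x t : ℝ}

theorem pdx_eq_of_comp (hfg : ∀ x t, g (z x t) t = f x t)
    (hg : DifferentiableAt ℝ (uncurry g) (z x t, t))
    (hz : DifferentiableAt ℝ (uncurry z) (x, t)) :
    pdx f x t = pdx z x t * pdx g (z x t) t := by
  have h := hg.hasDerivAt_uncurry_comp (hasDerivAt_pdx hz) (hasDerivAt_const x t)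
  simp only [hfg, zero_mul, add_zero] at h
  exact h.deriv

theorem pdt_eq_of_comp (hfg : ∀ x t, g (z x t) t = f x t)
    (hg : DifferentiableAt ℝ (uncurry g) (z x t, t))
    (hz : DifferentiableAt ℝ (uncurry z) (x, t)) :
    pdt f x t = pdt z x t * pdx g (z x t) t + pdt g (z x t) t := by
  have h := hg.hasDerivAt_uncurry_comp (hasDerivAt_pdt hz) (hasDerivAt_id t)
  simp only [id_eq, hfg, one_mul] at h
  exact h.deriv

end ChangeOfVariables

theorem chain_linearizes_under_reciprocal_transformation_general
    (c : ℤ → ℝ → ℝ → ℝ)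
    (hc0 : ∀ x t : ℝ, c 0 x t ≠ 0)
    (hchain : ∀ (k : ℤ) (x t : ℝ),
      pdt (c k) x t = c 1 x t * pdx (c k) x t - c 0 x t * pdx (c (k + 1)) x t)
    (z : ℝ → ℝ → ℝ) (hz : ContDiff ℝ (⊤ : ℕ∞) (Function.uncurry z))
    (hzx : ∀ x t : ℝ, pdx z x t = 1 / c 0 x t)
    (hzt : ∀ x t : ℝ, pdt z x t = c 1 x t / c 0 x t)
    (ct : ℤ → ℝ → ℝ → ℝ)
    (hct : ∀ k : ℤ, ContDiff ℝ (⊤ : ℕ∞) (Function.uncurry (ct k)))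
    (hcompat : ∀ (k : ℤ) (x t : ℝ), ct k (z x t) t = c k x t) :
    ∀ (k : ℤ) (x t : ℝ), pdt (ct k) (z x t) t + pdx (ct (k + 1)) (z x t) t = 0 := by
  intro k x t
  have hzd : DifferentiableAt ℝ (uncurry z) (x, t) := hz.differentiable (by simp) _
  have hctd (m : ℤ) : DifferentiableAt ℝ (uncurry (ct m)) (z x t, t) :=
    (hct m).differentiable (by simp) _
  have h := hchain k x t
  rw [pdt_eq_of_comp (hcompat k) (hctd k) hzd, pdx_eq_of_comp (hcompat k) (hctd k) hzd,
    pdx_eq_of_comp (hcompat (k + 1)) (hctd (k + 1)) hzd, hzx, hzt] at h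
  field_simp [hc0 x t] at h
  refine (mul_eq_zero.mp ?_).resolve_left (hc0 x t)
  linear_combination h

/-- Under the reciprocal transformation `dz = (1/c₀)dx + (c₁/c₀)dt`, `dy = dt`, the
hydrodynamic chain `∂ₜ c_k = c₁ ∂ₓ c_k − c₀ ∂ₓ c_{k+1}` linearizes to
`∂_y c̃_k + ∂_z c̃_{k+1} = 0`. -/
theorem chain_linearizes_under_reciprocal_transformation
    (c : ℤ → ℝ → ℝ → ℝ)
    (hc : ∀ k : ℤ, ContDiff ℝ (⊤ : ℕ∞) (Function.uncurry (c k)))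
    (hc0 : ∀ x t : ℝ, c 0 x t ≠ 0)
    (hchain : ∀ (k : ℤ) (x t : ℝ),
      pdt (c k) x t = c 1 x t * pdx (c k) x t - c 0 x t * pdx (c (k + 1)) x t)
    (z : ℝ → ℝ → ℝ) (hz : ContDiff ℝ (⊤ : ℕ∞) (Function.uncurry z))
    (hzx : ∀ x t : ℝ, pdx z x t = 1 / c 0 x t)
    (hzt : ∀ x t : ℝ, pdt z x t = c 1 x t / c 0 x t)
    (ct : ℤ → ℝ → ℝ → ℝ)
    (hct : ∀ k : ℤ, ContDiff ℝ (⊤ : ℕ∞) (Function.uncurry (ct k)))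
    (hcompat : ∀ (k : ℤ) (x t : ℝ), ct k (z x t) t = c k x t) :
    ∀ (k : ℤ) (x t : ℝ), pdt (ct k) (z x t) t + pdx (ct (k + 1)) (z x t) t = 0 :=
  chain_linearizes_under_reciprocal_transformation_general c hc0 hchain z hz hzx hzt ct hct hcompat
end

section
/- Let N ≥ 1, ε ∈ ℝ, and let λ, λ̃ ∈ ℝ with λ ≠ 0, λ̃ ≠ 0 and λ ≠ λ̃. Let r₁,…,r_N : ℝ² → ℝ be smooth functions of (x,τ) with 1 − r_m(x,τ)/λ > 0 and 1 − r_m(x,τ)/λ̃ > 0 for all m and all (x,τ). Define μ := Π_{m=1}^N (1 − r_m/λ)^{−ε} and μ̃ := Π_{m=1}^N (1 − r_m/λ̃)^{−ε}. Suppose ∂_τ r_i = [1/((1 − r_i/λ̃) μ̃)] ∂_x r_i for every i. Then ∂_τ μ = (λ̃/(λ̃ − λ)) ∂_x(μ/μ̃) everywhere. -/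
open Real Set

/-!
Both sides are computed through logarithmic derivatives. Since `log μ = -ε Σ log (1 - r_m/λ)`,
`∂_τ μ = -ε μ Σ ∂_τ r_m / (r_m - λ)` and
`∂_x (μ/μ̃) = -ε (μ/μ̃) Σ ∂_x r_m (1/(r_m - λ) - 1/(r_m - λ̃))`.
Substituting the flow `∂_τ r_m = λ̃ ∂_x r_m / ((λ̃ - r_m) μ̃)` into the first sum, the two agree
term by term through the partial fraction `1/(r - λ) - 1/(r - λ̃) = (λ - λ̃)/((r - λ)(r - λ̃))`.
-/

section LogDeriv

variable {𝕜 : Type*} [NontriviallyNormedField 𝕜]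

theorem deriv_eq_mul_logDeriv {𝕜' : Type*} [NontriviallyNormedField 𝕜'] [NormedAlgebra 𝕜 𝕜']
    {f : 𝕜 → 𝕜'} {x : 𝕜} (hf : f x ≠ 0) :
    deriv f x = f x * logDeriv f x := by
  rw [logDeriv_apply, mul_div_cancel₀ _ hf]

theorem logDeriv_one_sub_div_const (f : 𝕜 → 𝕜) (x : 𝕜) {l : 𝕜} (hl : l ≠ 0) :
    logDeriv (fun y => 1 - f y / l) x = deriv f x / (f x - l) := by
  rw [logDeriv_apply, deriv_const_sub, deriv_div_const, one_sub_div hl, ← neg_div,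
    div_div_div_cancel_right₀ hl, neg_div, ← div_neg, neg_sub]

end LogDeriv

theorem logDeriv_fun_rpow_const {f : ℝ → ℝ} {x : ℝ} (hdf : DifferentiableAt ℝ f x)
    (hf : 0 < f x) (p : ℝ) : logDeriv (fun y => f y ^ p) x = p * logDeriv f x := by
  rw [logDeriv_apply, (hdf.hasDerivAt.rpow_const (.inl hf.ne')).deriv, rpow_sub_one hf.ne',
    logDeriv_apply]
  field_simp [(rpow_pos_of_pos hf p).ne']

theorem ne_of_one_sub_div_ne_zero {K : Type*} [DivisionRing K] {a l : K} (hl : l ≠ 0)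
    (h : 1 - a / l ≠ 0) : a ≠ l := by
  rintro rfl
  exact h (by rw [div_self hl, sub_self])

section ProdOneSubDivRpow

variable {ι : Type*} [Fintype ι] {l : ℝ}

theorem prod_one_sub_div_rpow_pos {a : ι → ℝ} (hpos : ∀ i, 0 < 1 - a i / l) (p : ℝ) :
    0 < ∏ i, (1 - a i / l) ^ p :=
  Finset.prod_pos fun i _ => rpow_pos_of_pos (hpos i) p

variable {u : ι → ℝ → ℝ} {t : ℝ}

theorem differentiableAt_prod_one_sub_div_rpow (hu : ∀ i, DifferentiableAt ℝ (u i) t)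
    (hpos : ∀ i, 0 < 1 - u i t / l) (p : ℝ) :
    DifferentiableAt ℝ (fun s => ∏ i, (1 - u i s / l) ^ p) t :=
  .fun_finsetProd fun i _ => (((hu i).div_const l).const_sub 1).rpow_const (.inl (hpos i).ne')

theorem logDeriv_prod_one_sub_div_rpow (hl : l ≠ 0) (hu : ∀ i, DifferentiableAt ℝ (u i) t)
    (hpos : ∀ i, 0 < 1 - u i t / l) (p : ℝ) :
    logDeriv (fun s => ∏ i, (1 - u i s / l) ^ p) t = p * ∑ i, deriv (u i) t / (u i t - l) := by
  have hdu : ∀ i, DifferentiableAt ℝ (fun s => 1 - u i s / l) t :=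
    fun i => ((hu i).div_const l).const_sub 1
  rw [logDeriv_prod (f := fun i s => (1 - u i s / l) ^ p)
      (fun i _ => (rpow_pos_of_pos (hpos i) p).ne')
      (fun i _ => (hdu i).rpow_const (.inl (hpos i).ne')), Finset.mul_sum]
  refine Finset.sum_congr rfl fun i _ => ?_
  rw [logDeriv_fun_rpow_const (hdu i) (hpos i), logDeriv_one_sub_div_const _ _ hl]

theorem logDeriv_div_prod_one_sub_div_rpow {l' : ℝ} (hl : l ≠ 0) (hl' : l' ≠ 0)
    (hu : ∀ i, DifferentiableAt ℝ (u i) t) (hpos : ∀ i, 0 < 1 - u i t / l)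
    (hpos' : ∀ i, 0 < 1 - u i t / l') (p : ℝ) :
    logDeriv (fun s => (∏ i, (1 - u i s / l) ^ p) / ∏ i, (1 - u i s / l') ^ p) t
      = p * ∑ i, (deriv (u i) t / (u i t - l) - deriv (u i) t / (u i t - l')) := by
  rw [logDeriv_div t (prod_one_sub_div_rpow_pos hpos p).ne' (prod_one_sub_div_rpow_pos hpos' p).ne'
      (differentiableAt_prod_one_sub_div_rpow hu hpos p)
      (differentiableAt_prod_one_sub_div_rpow hu hpos' p),
    logDeriv_prod_one_sub_div_rpow hl hu hpos, logDeriv_prod_one_sub_div_rpow hl' hu hpos',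
    Finset.sum_sub_distrib, mul_sub]

end ProdOneSubDivRpow

theorem Differentiable.differentiableAt_slices {E : Type*} [NormedAddCommGroup E]
    [NormedSpace ℝ E] {f : ℝ → ℝ → E} (hf : Differentiable ℝ (fun p : ℝ × ℝ => f p.1 p.2))
    (x t : ℝ) :
    DifferentiableAt ℝ (fun x' => f x' t) x ∧ DifferentiableAt ℝ (fun t' => f x t') t := by
  constructor
  · exact (hf (x, t)).comp x ((differentiableAt_id (𝕜 := ℝ)).prodMk (differentiableAt_const t))
  · exact (hf (x, t)).comp t ((differentiableAt_const x).prodMk (differentiableAt_id (𝕜 := ℝ)))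

theorem generating_function_commuting_flows_conservation_general
    (N : ℕ) (ε : ℝ) (l lt : ℝ) (hl : l ≠ 0) (hlt : lt ≠ 0) (hll : l ≠ lt)
    (r : ℝ → ℝ → Fin N → ℝ)
    (hr : ContDiff ℝ (⊤ : ℕ∞) (fun p : ℝ × ℝ => r p.1 p.2))
    (hpos : ∀ (x τ : ℝ) (m : Fin N), 0 < 1 - r x τ m / l)
    (hpos' : ∀ (x τ : ℝ) (m : Fin N), 0 < 1 - r x τ m / lt)
    (μ : ℝ → ℝ → ℝ)
    (hμ : ∀ x τ : ℝ, μ x τ = ∏ m, (1 - r x τ m / l) ^ (-ε))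
    (μt : ℝ → ℝ → ℝ)
    (hμt : ∀ x τ : ℝ, μt x τ = ∏ m, (1 - r x τ m / lt) ^ (-ε))
    (hsys : ∀ (i : Fin N) (x τ : ℝ),
      pdt (fun x' τ' => r x' τ' i) x τ
        = (1 / ((1 - r x τ i / lt) * μt x τ)) * pdx (fun x' τ' => r x' τ' i) x τ) :
    ∀ x τ : ℝ,
      pdt μ x τ = (lt / (lt - l)) * pdx (fun x' τ' => μ x' τ' / μt x' τ') x τ := by
  intro x τ
  obtain ⟨hdx, hdτ⟩ := (hr.differentiable (by simp)).differentiableAt_slices x τ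
  have hμ0 : μ x τ ≠ 0 := (hμ x τ ▸ prod_one_sub_div_rpow_pos (hpos x τ) _).ne'
  have hμt0 : μt x τ ≠ 0 := (hμt x τ ▸ prod_one_sub_div_rpow_pos (hpos' x τ) _).ne'
  have hlogτ : logDeriv (μ x) τ = -ε * ∑ m, pdt (fun x' τ' => r x' τ' m) x τ / (r x τ m - l) := by
    rw [show μ x = _ from funext (hμ x),
      logDeriv_prod_one_sub_div_rpow hl (differentiableAt_pi.1 hdτ) (hpos x τ)]
    rfl
  have hlogx : logDeriv (fun x' => μ x' τ / μt x' τ) x = -ε * ∑ m,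
      (pdx (fun x' τ' => r x' τ' m) x τ / (r x τ m - l)
        - pdx (fun x' τ' => r x' τ' m) x τ / (r x τ m - lt)) := by
    simp only [hμ, hμt]
    exact logDeriv_div_prod_one_sub_div_rpow hl hlt (differentiableAt_pi.1 hdx) (hpos x τ)
      (hpos' x τ) _
  calc pdt μ x τ = μ x τ * logDeriv (μ x) τ := deriv_eq_mul_logDeriv hμ0
    _ = lt / (lt - l) * (μ x τ / μt x τ * logDeriv (fun x' => μ x' τ / μt x' τ) x) := by
      rw [hlogτ, hlogx]
      simp only [hsys, Finset.mul_sum]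
      refine Finset.sum_congr rfl fun m _ => ?_
      have hrl := ne_of_one_sub_div_ne_zero hl (hpos x τ m).ne'
      have hrlt := ne_of_one_sub_div_ne_zero hlt (hpos' x τ m).ne'
      field_simp [sub_ne_zero.2 hrl, sub_ne_zero.2 hrlt, sub_ne_zero.2 hrlt.symm,
        sub_ne_zero.2 hll.symm]
      ring
    _ = lt / (lt - l) * pdx (fun x' τ' => μ x' τ' / μt x' τ') x τ := by
      rw [← deriv_eq_mul_logDeriv (f := fun x' => μ x' τ / μt x' τ) (div_ne_zero hμ0 hμt0)]
      rfl

/-- For the generating function of commuting flows of the ε-system,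
`∂_τ rᵢ = [1/((1 − rᵢ/λ̃) μ̃)] ∂ₓ rᵢ`, the generating function
`μ = Π (1 − r_m/λ)^{−ε}` satisfies `∂_τ μ = (λ̃/(λ̃ − λ)) ∂ₓ(μ/μ̃)`. -/
theorem generating_function_commuting_flows_conservation
    (N : ℕ) (hN : 1 ≤ N) (ε : ℝ) (l lt : ℝ) (hl : l ≠ 0) (hlt : lt ≠ 0) (hll : l ≠ lt)
    (r : ℝ → ℝ → Fin N → ℝ)
    (hr : ContDiff ℝ (⊤ : ℕ∞) (fun p : ℝ × ℝ => r p.1 p.2))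
    (hpos : ∀ (x τ : ℝ) (m : Fin N), 0 < 1 - r x τ m / l)
    (hpos' : ∀ (x τ : ℝ) (m : Fin N), 0 < 1 - r x τ m / lt)
    (μ : ℝ → ℝ → ℝ)
    (hμ : ∀ x τ : ℝ, μ x τ = ∏ m, (1 - r x τ m / l) ^ (-ε))
    (μt : ℝ → ℝ → ℝ)
    (hμt : ∀ x τ : ℝ, μt x τ = ∏ m, (1 - r x τ m / lt) ^ (-ε))
    (hsys : ∀ (i : Fin N) (x τ : ℝ),
      pdt (fun x' τ' => r x' τ' i) x τ
        = (1 / ((1 - r x τ i / lt) * μt x τ)) * pdx (fun x' τ' => r x' τ' i) x τ) :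
    ∀ x τ : ℝ,
      pdt μ x τ = (lt / (lt - l)) * pdx (fun x' τ' => μ x' τ' / μt x' τ') x τ :=
  generating_function_commuting_flows_conservation_general N ε l lt hl hlt hll r hr hpos hpos' μ hμ
    μt hμt hsys
end

section
/- Let N ≥ 1, ε ∈ ℝ, λ ∈ ℝ with λ ≠ 0, and let r₁,…,r_N : ℝ² → ℝ be smooth functions of (x,s) with r_m(x,s) > 0 and r_m(x,s) − λ > 0 for all m and all (x,s). Suppose ∂_s r_i = [Π_{m=1}^N r_m^ε / r_i] ∂_x r_i for every i (the first negative commuting flow of the ε-system, with s = t₋₁). Define μ := Π_{m=1}^N (r_m − λ)^{−ε} and b₀ := Π_{m=1}^N r_m^{−ε}. Then ∂_s μ = ∂_x[μ/(λ b₀)] everywhere. -/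
/-!
Both sides are computed by logarithmic differentiation. Along the flow,
`∂ₛ log μ = -ε Σₘ (b₀⁻¹ / rₘ) ∂ₓrₘ / (rₘ - λ)`, while
`∂ₓ log (μ / (λ b₀)) = ε Σₘ ∂ₓrₘ (1 / rₘ - 1 / (rₘ - λ))`, and the partial fractions
`1 / r - 1 / (r - λ) = -λ / (r (r - λ))` make the two agree after multiplying by `μ` and
`μ / (λ b₀)` respectively.
-/

open Real Set

theorem HasDerivAt.finset_prod_rpow_const {ι : Type*} {s : Finset ι} {f : ι → ℝ → ℝ}
    {f' : ι → ℝ} {x : ℝ} (p : ℝ) (hf : ∀ i ∈ s, HasDerivAt (f i) (f' i) x)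
    (hne : ∀ i ∈ s, f i x ≠ 0) :
    HasDerivAt (fun y => ∏ i ∈ s, f i y ^ p)
      ((∏ i ∈ s, f i x ^ p) * ∑ i ∈ s, p * f' i / f i x) x := by
  classical
  refine (HasDerivAt.fun_finsetProd fun i hi =>
    (hf i hi).rpow_const (Or.inl (hne i hi))).congr_deriv ?_
  rw [Finset.mul_sum]
  refine Finset.sum_congr rfl fun i hi => ?_
  rw [← Finset.mul_prod_erase s _ hi, smul_eq_mul, rpow_sub_one (hne i hi)]
  field_simp [hne i hi]

theorem hasDerivAt_pdx_s8 {f : ℝ → ℝ → ℝ} (hf : Differentiable ℝ fun p : ℝ × ℝ => f p.1 p.2)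
    (x t : ℝ) : HasDerivAt (fun x' => f x' t) (pdx f x t) x :=
  have hdiff : DifferentiableAt ℝ (fun x' => f x' t) x :=
    hf.comp (differentiable_id.prodMk (differentiable_const t)) x
  hdiff.hasDerivAt

theorem hasDerivAt_pdt_s8 {f : ℝ → ℝ → ℝ} (hf : Differentiable ℝ fun p : ℝ × ℝ => f p.1 p.2)
    (x t : ℝ) : HasDerivAt (fun t' => f x t') (pdt f x t) t :=
  have hdiff : DifferentiableAt ℝ (fun t' => f x t') t :=
    hf.comp ((differentiable_const x).prodMk differentiable_id) t
  hdiff.hasDerivAt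

theorem flow_summand_partial_fractions {r l : ℝ} (hr : r ≠ 0) (hrl : r - l ≠ 0) (hl : l ≠ 0)
    (ε P v : ℝ) :
    -ε * (P / r * v) / (r - l) = l⁻¹ * P * (-ε * v / (r - l) + ε * v / r) := by
  field_simp
  ring

theorem negative_flow_generating_function_general
    (N : ℕ) (ε : ℝ) (l : ℝ) (hl : l ≠ 0)
    (r : ℝ → ℝ → Fin N → ℝ)
    (hr : ContDiff ℝ (⊤ : ℕ∞) (fun p : ℝ × ℝ => r p.1 p.2))
    (hpos : ∀ (x s : ℝ) (m : Fin N), 0 < r x s m)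
    (hpos' : ∀ (x s : ℝ) (m : Fin N), 0 < r x s m - l)
    (hsys : ∀ (i : Fin N) (x s : ℝ),
      pdt (fun x' s' => r x' s' i) x s
        = ((∏ m, (r x s m) ^ ε) / r x s i) * pdx (fun x' s' => r x' s' i) x s)
    (μ : ℝ → ℝ → ℝ)
    (hμ : ∀ x s : ℝ, μ x s = ∏ m, (r x s m - l) ^ (-ε))
    (b0 : ℝ → ℝ → ℝ)
    (hb0 : ∀ x s : ℝ, b0 x s = ∏ m, (r x s m) ^ (-ε)) :
    ∀ x s : ℝ, pdt μ x s = pdx (fun x' s' => μ x' s' / (l * b0 x' s')) x s := by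
  obtain rfl : μ = fun x s => ∏ m, (r x s m - l) ^ (-ε) := funext₂ hμ
  obtain rfl : b0 = fun x s => ∏ m, (r x s m) ^ (-ε) := funext₂ hb0
  intro x s
  have hrm (m : Fin N) : Differentiable ℝ fun p : ℝ × ℝ => r p.1 p.2 m :=
    differentiable_pi.mp (hr.differentiable (by simp)) m
  have hrx (m : Fin N) : HasDerivAt (fun x' => r x' s m) (pdx (fun x' s' => r x' s' m) x s) x :=
    hasDerivAt_pdx_s8 (f := fun x' s' => r x' s' m) (hrm m) x s
  have hrs (m : Fin N) : HasDerivAt (fun s' => r x s' m) (pdt (fun x' s' => r x' s' m) x s) s :=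
    hasDerivAt_pdt_s8 (f := fun x' s' => r x' s' m) (hrm m) x s
  have hμs := HasDerivAt.finset_prod_rpow_const (s := .univ) (-ε)
    (fun m _ => (hrs m).sub_const l) fun m _ => (hpos' x s m).ne'
  have hμx := HasDerivAt.finset_prod_rpow_const (s := .univ) (-ε)
    (fun m _ => (hrx m).sub_const l) fun m _ => (hpos' x s m).ne'
  have hPx := HasDerivAt.finset_prod_rpow_const (s := .univ) ε
    (fun m _ => hrx m) fun m _ => (hpos x s m).ne'
  have hquot : (fun x' s' => (∏ m, (r x' s' m - l) ^ (-ε)) / (l * ∏ m, r x' s' m ^ (-ε)))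
      = fun x' s' => l⁻¹ * ((∏ m, (r x' s' m - l) ^ (-ε)) * ∏ m, r x' s' m ^ ε) := by
    funext x' s'
    simp only [rpow_neg (hpos x' s' _).le, Finset.prod_inv_distrib]
    field_simp
  rw [hquot, pdt, hμs.deriv, pdx]
  refine (((hμx.mul hPx).const_mul l⁻¹).deriv.trans ?_).symm
  simp only [hsys, flow_summand_partial_fractions (hpos x s _).ne' (hpos' x s _).ne' hl]
  rw [← Finset.mul_sum, Finset.sum_add_distrib]
  ring

/-- For the first negative commuting flow of the ε-system,
`∂ₛ rᵢ = [Π r_m^ε / rᵢ] ∂ₓ rᵢ`, the generating function `μ = Π (r_m − λ)^{−ε}`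
satisfies `∂ₛ μ = ∂ₓ[μ/(λ b₀)]`, where `b₀ = Π r_m^{−ε}`. -/
theorem negative_flow_generating_function
    (N : ℕ) (hN : 1 ≤ N) (ε : ℝ) (l : ℝ) (hl : l ≠ 0)
    (r : ℝ → ℝ → Fin N → ℝ)
    (hr : ContDiff ℝ (⊤ : ℕ∞) (fun p : ℝ × ℝ => r p.1 p.2))
    (hpos : ∀ (x s : ℝ) (m : Fin N), 0 < r x s m)
    (hpos' : ∀ (x s : ℝ) (m : Fin N), 0 < r x s m - l)
    (hsys : ∀ (i : Fin N) (x s : ℝ),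
      pdt (fun x' s' => r x' s' i) x s
        = ((∏ m, (r x s m) ^ ε) / r x s i) * pdx (fun x' s' => r x' s' i) x s)
    (μ : ℝ → ℝ → ℝ)
    (hμ : ∀ x s : ℝ, μ x s = ∏ m, (r x s m - l) ^ (-ε))
    (b0 : ℝ → ℝ → ℝ)
    (hb0 : ∀ x s : ℝ, b0 x s = ∏ m, (r x s m) ^ (-ε)) :
    ∀ x s : ℝ, pdt μ x s = pdx (fun x' s' => μ x' s' / (l * b0 x' s')) x s :=
  negative_flow_generating_function_general N ε l hl r hr hpos hpos' hsys μ hμ b0 hb0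
end

section
/- Let u, η : ℝ² → ℝ be smooth functions of (x,t) satisfying the shallow water equations u_t = ∂_x(u²/2 + η) and η_t = ∂_x(uη). Define A_k := u^k η for k = 0, 1, 2, …. Then the Benney momentum chain holds: ∂_t A_k = ∂_x A_{k+1} + k A_{k−1} ∂_x A₀ for every k ≥ 0, where for k = 0 the term k A_{k−1} ∂_x A₀ is zero. -/
open Real Set

/-!
Smooth solutions may be differentiated pointwise, so the shallow water equations take the
quasilinear form `uₜ = u uₓ + ηₓ`, `ηₜ = uₓ η + u ηₓ`. Expanding `∂ₜ(uᵏη)` by the product and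
power rules and substituting these gives `(k+1) uᵏ uₓ η + u^{k+1} ηₓ + k u^{k-1} η ηₓ`, which is
`∂ₓ(u^{k+1}η) + k A_{k-1} ∂ₓA₀`.
-/

section PartialDerivatives

variable {f g : ℝ → ℝ → ℝ} {x t : ℝ}

lemma DifferentiableAt.comp_prodMk_left (hf : DifferentiableAt ℝ (Function.uncurry f) (x, t)) :
    DifferentiableAt ℝ (fun x' => f x' t) x :=
  hf.comp (f := fun x' : ℝ => (x', t)) x (differentiableAt_id.prodMk (differentiableAt_const t))

lemma DifferentiableAt.comp_prodMk_right (hf : DifferentiableAt ℝ (Function.uncurry f) (x, t)) :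
    DifferentiableAt ℝ (fun t' => f x t') t :=
  hf.comp t ((differentiableAt_const x).prodMk differentiableAt_id)

lemma pdx_add (hf : DifferentiableAt ℝ (fun x' => f x' t) x)
    (hg : DifferentiableAt ℝ (fun x' => g x' t) x) :
    pdx (fun x' t' => f x' t' + g x' t') x t = pdx f x t + pdx g x t :=
  deriv_fun_add hf hg

lemma pdx_div_const (c : ℝ) : pdx (fun x' t' => f x' t' / c) x t = pdx f x t / c :=
  deriv_div_const c

lemma pdx_mul (hf : DifferentiableAt ℝ (fun x' => f x' t) x)
    (hg : DifferentiableAt ℝ (fun x' => g x' t) x) :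
    pdx (fun x' t' => f x' t' * g x' t') x t = pdx f x t * g x t + f x t * pdx g x t :=
  deriv_fun_mul hf hg

lemma pdx_pow (hf : DifferentiableAt ℝ (fun x' => f x' t) x) (n : ℕ) :
    pdx (fun x' t' => f x' t' ^ n) x t = n * f x t ^ (n - 1) * pdx f x t :=
  deriv_fun_pow hf n

-- `pdt f x t` is definitionally `pdx (flip f) t x`.
lemma pdt_mul (hf : DifferentiableAt ℝ (fun t' => f x t') t)
    (hg : DifferentiableAt ℝ (fun t' => g x t') t) :
    pdt (fun x' t' => f x' t' * g x' t') x t = pdt f x t * g x t + f x t * pdt g x t :=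
  pdx_mul (f := flip f) (g := flip g) hf hg

lemma pdt_pow (hf : DifferentiableAt ℝ (fun t' => f x t') t) (n : ℕ) :
    pdt (fun x' t' => f x' t' ^ n) x t = n * f x t ^ (n - 1) * pdt f x t :=
  pdx_pow (f := flip f) hf n

end PartialDerivatives

section ShallowWater

variable {u η : ℝ → ℝ → ℝ} {x t : ℝ}

lemma pdt_eq_of_shallow_water_momentum (hux : DifferentiableAt ℝ (fun x' => u x' t) x)
    (hηx : DifferentiableAt ℝ (fun x' => η x' t) x)
    (h : pdt u x t = pdx (fun x' t' => u x' t' ^ 2 / 2 + η x' t') x t) :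
    pdt u x t = u x t * pdx u x t + pdx η x t := by
  rw [h, pdx_add (f := fun x' t' => u x' t' ^ 2 / 2) ((hux.fun_pow 2).div_const 2) hηx,
    pdx_div_const (f := fun x' t' => u x' t' ^ 2),
    pdx_pow (f := u) hux]
  push_cast
  ring

lemma pdt_eq_of_shallow_water_mass (hux : DifferentiableAt ℝ (fun x' => u x' t) x)
    (hηx : DifferentiableAt ℝ (fun x' => η x' t) x)
    (h : pdt η x t = pdx (fun x' t' => u x' t' * η x' t') x t) :
    pdt η x t = pdx u x t * η x t + u x t * pdx η x t := by
  rw [h, pdx_mul hux hηx]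

theorem pdt_pow_mul_eq_benney_of_quasilinear (hux : DifferentiableAt ℝ (fun x' => u x' t) x)
    (hut : DifferentiableAt ℝ (fun t' => u x t') t)
    (hηx : DifferentiableAt ℝ (fun x' => η x' t) x)
    (hηt : DifferentiableAt ℝ (fun t' => η x t') t)
    (hu : pdt u x t = u x t * pdx u x t + pdx η x t)
    (hη : pdt η x t = pdx u x t * η x t + u x t * pdx η x t) (k : ℕ) :
    pdt (fun x' t' => u x' t' ^ k * η x' t') x t =
      pdx (fun x' t' => u x' t' ^ (k + 1) * η x' t') x t
        + k * (u x t ^ (k - 1) * η x t) * pdx η x t := by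
  rw [pdt_mul (hut.fun_pow k) hηt, pdt_pow (f := u) hut, hu, hη,
    pdx_mul (hux.fun_pow (k + 1)) hηx, pdx_pow (f := u) hux]
  cases k with
  | zero => simp
  | succ m =>
    simp only [Nat.add_sub_cancel]
    push_cast
    ring

end ShallowWater

/-- Solutions of the shallow water equations `uₜ = ∂ₓ(u²/2 + η)`, `ηₜ = ∂ₓ(uη)`
give a reduction `A_k = uᵏη` of the Benney momentum chain
`∂ₜ A_k = ∂ₓ A_{k+1} + k A_{k−1} ∂ₓ A₀` (the last term being zero for `k = 0`). -/
theorem shallow_water_satisfies_benney_chain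
    (u η : ℝ → ℝ → ℝ)
    (hu : ContDiff ℝ (⊤ : ℕ∞) (Function.uncurry u))
    (hη : ContDiff ℝ (⊤ : ℕ∞) (Function.uncurry η))
    (h1 : ∀ x t : ℝ, pdt u x t = pdx (fun x' t' => (u x' t') ^ 2 / 2 + η x' t') x t)
    (h2 : ∀ x t : ℝ, pdt η x t = pdx (fun x' t' => u x' t' * η x' t') x t)
    (A : ℕ → ℝ → ℝ → ℝ)
    (hA : ∀ (k : ℕ) (x t : ℝ), A k x t = (u x t) ^ k * η x t) :
    ∀ (k : ℕ) (x t : ℝ),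
      pdt (A k) x t = pdx (A (k + 1)) x t + (k : ℝ) * A (k - 1) x t * pdx (A 0) x t := by
  obtain rfl : A = fun k x t => u x t ^ k * η x t :=
    funext fun k => funext fun x => funext (hA k x)
  intro k x t
  have hud := (hu.differentiable (by simp)) (x, t)
  have hηd := (hη.differentiable (by simp)) (x, t)
  have hA₀ : pdx (fun x' t' => u x' t' ^ 0 * η x' t') x t = pdx η x t := by
    simp only [pow_zero, one_mul]
  rw [hA₀]
  exact pdt_pow_mul_eq_benney_of_quasilinear hud.comp_prodMk_left hud.comp_prodMk_right
    hηd.comp_prodMk_left hηd.comp_prodMk_right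
    (pdt_eq_of_shallow_water_momentum hud.comp_prodMk_left hηd.comp_prodMk_left (h1 x t))
    (pdt_eq_of_shallow_water_mass hud.comp_prodMk_left hηd.comp_prodMk_left (h2 x t)) k
end

section
/- Let N ≥ 1 and let u₁,…,u_N, η₁,…,η_N : ℝ² → ℝ be smooth functions of (x,t) satisfying ∂_t u_i = ∂_x[u_i²/2 + Σ_{k=1}^N η_k] and ∂_t η_i = ∂_x(u_i η_i) for every i. Let Ω := {(x,t,p) ∈ ℝ³ : p ≠ u_k(x,t) for all k} and define λ : Ω → ℝ by λ(x,t,p) := p + Σ_{k=1}^N η_k(x,t)/(p − u_k(x,t)), and A₀ := Σ_{k=1}^N η_k. Then on Ω: ∂_t λ = p ∂_x λ − (∂_p λ) ∂_x A₀; equivalently, λ satisfies λ_t − μ λ_x = (∂λ/∂μ)[μ_t − ∂_x(μ²/2 + A₀)] with μ = p an independent variable. -/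
open Real Set

/-- Partial derivative in the first variable of a function of `(x, t, p)`. -/
noncomputable def pX (f : ℝ → ℝ → ℝ → ℝ) (x t p : ℝ) : ℝ := deriv (fun x' => f x' t p) x

/-- Partial derivative in the second variable of a function of `(x, t, p)`. -/
noncomputable def pT (f : ℝ → ℝ → ℝ → ℝ) (x t p : ℝ) : ℝ := deriv (fun t' => f x t' p) t

/-- Partial derivative in the third variable of a function of `(x, t, p)`. -/
noncomputable def pP (f : ℝ → ℝ → ℝ → ℝ) (x t p : ℝ) : ℝ := deriv (fun p' => f x t p') p

/-!
Each pole term `f = η/(p - u)` satisfies the kinetic equation up to an exact `x`-derivative: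
using `uₜ = u uₓ + ∂ₓA₀` and `ηₜ = (u η)ₓ` one finds `fₜ = p fₓ - f_p ∂ₓA₀ - ηₓ`.
Summing over the poles, the defects `-ηₓ` add up to `-∂ₓA₀`, which is exactly the
contribution of the leading term `p` of `λ` to `-λ_p ∂ₓA₀`.
-/

open Finset

lemma differentiableAt_slice_fst {f : ℝ → ℝ → ℝ} {x t : ℝ}
    (hf : DifferentiableAt ℝ (Function.uncurry f) (x, t)) :
    DifferentiableAt ℝ (fun x' => f x' t) x :=
  DifferentiableAt.comp (f := fun x' => (x', t)) x hf
    (differentiableAt_id.prodMk (differentiableAt_const t))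

lemma differentiableAt_slice_snd {f : ℝ → ℝ → ℝ} {x t : ℝ}
    (hf : DifferentiableAt ℝ (Function.uncurry f) (x, t)) :
    DifferentiableAt ℝ (fun t' => f x t') t :=
  DifferentiableAt.comp (f := fun t' => (x, t')) t hf
    ((differentiableAt_const x).prodMk differentiableAt_id)

lemma HasDerivAt.div_const_sub {f g : ℝ → ℝ} {f' g' y p : ℝ}
    (hf : HasDerivAt f f' y) (hg : HasDerivAt g g' y) (hp : p ≠ g y) :
    HasDerivAt (fun y => f y / (p - g y)) ((f' * (p - g y) + f y * g') / (p - g y) ^ 2) y :=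
  (hf.fun_div ((hasDerivAt_const y p).fun_sub hg) (sub_ne_zero.mpr hp)).congr_deriv (by ring)

section PoleSum

variable {ι : Type*} [Fintype ι]

lemma hasDerivAt_add_sum_div_const_sub {a b : ι → ℝ → ℝ} {a' b' : ι → ℝ} {c p y : ℝ}
    (ha : ∀ k, HasDerivAt (a k) (a' k) y) (hb : ∀ k, HasDerivAt (b k) (b' k) y)
    (hp : ∀ k, p ≠ b k y) :
    HasDerivAt (fun y => c + ∑ k, a k y / (p - b k y))
      (∑ k, (a' k * (p - b k y) + a k y * b' k) / (p - b k y) ^ 2) y :=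
  (HasDerivAt.fun_sum fun k _ => (ha k).div_const_sub (hb k) (hp k)).const_add c

lemma hasDerivAt_add_sum_div_sub_const (a b : ι → ℝ) {p : ℝ} (hp : ∀ k, p ≠ b k) :
    HasDerivAt (fun q => q + ∑ k, a k / (q - b k)) (1 - ∑ k, a k / (p - b k) ^ 2) p := by
  have hpole : ∀ k, HasDerivAt (fun q => a k / (q - b k)) (-(a k / (p - b k) ^ 2)) p := fun k =>
    ((hasDerivAt_const p (a k)).fun_div ((hasDerivAt_id' p).sub_const (b k))
      (sub_ne_zero.mpr (hp k))).congr_deriv (by ring)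
  simpa only [sum_neg_distrib, sub_eq_add_neg] using
    (hasDerivAt_id' p).fun_add (HasDerivAt.fun_sum fun k _ => hpole k)

/-- `ux`, `ηx` are the `x`-derivatives of `u`, `η` and `S = ∂ₓA₀`; the `t`-derivatives have
been eliminated by the equations of motion. -/
lemma sum_pole_kinetic_identity (u η ux ηx : ι → ℝ) {p S : ℝ} (hp : ∀ k, p ≠ u k)
    (hS : S = ∑ k, ηx k) :
    ∑ k, ((ux k * η k + u k * ηx k) * (p - u k) + η k * (u k * ux k + S)) / (p - u k) ^ 2
      = p * ∑ k, (ηx k * (p - u k) + η k * ux k) / (p - u k) ^ 2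
        - (1 - ∑ k, η k / (p - u k) ^ 2) * S := by
  have hterm : ∀ k, ((ux k * η k + u k * ηx k) * (p - u k) + η k * (u k * ux k + S))
        / (p - u k) ^ 2
      = p * ((ηx k * (p - u k) + η k * ux k) / (p - u k) ^ 2)
        + η k / (p - u k) ^ 2 * S - ηx k := by
    intro k
    have := sub_ne_zero.mpr (hp k)
    field_simp
    ring
  rw [sum_congr rfl fun k _ => hterm k, sum_sub_distrib, sum_add_distrib, ← mul_sum,
    ← sum_mul, ← hS]
  ring

end PoleSum

theorem zakharov_riemann_surface_kinetic_equation_general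
    (N : ℕ) (u η : Fin N → ℝ → ℝ → ℝ)
    (hu : ∀ i, ContDiff ℝ (⊤ : ℕ∞) (Function.uncurry (u i)))
    (hη : ∀ i, ContDiff ℝ (⊤ : ℕ∞) (Function.uncurry (η i)))
    (h1 : ∀ (i : Fin N) (x t : ℝ),
      deriv (fun t' => u i x t') t
        = deriv (fun x' => (u i x' t) ^ 2 / 2 + ∑ k, η k x' t) x)
    (h2 : ∀ (i : Fin N) (x t : ℝ),
      deriv (fun t' => η i x t') t = deriv (fun x' => u i x' t * η i x' t) x)
    (L : ℝ → ℝ → ℝ → ℝ)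
    (hL : ∀ x t p : ℝ, L x t p = p + ∑ k, η k x t / (p - u k x t))
    (A0 : ℝ → ℝ → ℝ) (hA0 : ∀ x t : ℝ, A0 x t = ∑ k, η k x t) :
    ∀ x t p : ℝ, (∀ k : Fin N, p ≠ u k x t) →
      pT L x t p = p * pX L x t p - pP L x t p * deriv (fun x' => A0 x' t) x := by
  intro x t p hp
  have hdiff : ∀ {f : ℝ → ℝ → ℝ}, ContDiff ℝ (⊤ : ℕ∞) (Function.uncurry f) →
      DifferentiableAt ℝ (Function.uncurry f) (x, t) :=
    fun hf => (hf.differentiable (by simp)).differentiableAt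
  have hux i := (differentiableAt_slice_fst (hdiff (hu i))).hasDerivAt
  have hut i := (differentiableAt_slice_snd (hdiff (hu i))).hasDerivAt
  have hηx i := (differentiableAt_slice_fst (hdiff (hη i))).hasDerivAt
  have hηt i := (differentiableAt_slice_snd (hdiff (hη i))).hasDerivAt
  have hA0x : HasDerivAt (fun x' => A0 x' t) (∑ k, deriv (fun x' => η k x' t) x) x := by
    simpa only [hA0] using HasDerivAt.fun_sum fun k _ => hηx k
  have hu_eq i : deriv (fun t' => u i x t') t
      = u i x t * deriv (fun x' => u i x' t) x + ∑ k, deriv (fun x' => η k x' t) x := by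
    rw [h1, ((((hux i).fun_pow 2).div_const 2).fun_add
      (HasDerivAt.fun_sum fun k _ => hηx k)).deriv]
    push_cast
    ring
  have hη_eq i : deriv (fun t' => η i x t') t
      = deriv (fun x' => u i x' t) x * η i x t + u i x t * deriv (fun x' => η i x' t) x := by
    rw [h2, ((hux i).fun_mul (hηx i)).deriv]
  simp only [pT, pX, pP, hL]
  rw [(hasDerivAt_add_sum_div_const_sub (c := p) hηt hut hp).deriv,
    (hasDerivAt_add_sum_div_const_sub (c := p) hηx hux hp).deriv,
    (hasDerivAt_add_sum_div_sub_const _ _ hp).deriv, hA0x.deriv]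
  simp only [hu_eq, hη_eq]
  exact sum_pole_kinetic_identity _ _ _ _ hp rfl

/-- The Riemann surface `λ = p + Σ η_k/(p − u_k)` of the Zakharov reduction
satisfies the kinetic equation `λₜ = p λₓ − λ_p ∂ₓ A₀` on
`Ω = {(x,t,p) : p ≠ u_k(x,t) for all k}`, where `A₀ = Σ η_k`. -/
theorem zakharov_riemann_surface_kinetic_equation
    (N : ℕ) (hN : 1 ≤ N) (u η : Fin N → ℝ → ℝ → ℝ)
    (hu : ∀ i, ContDiff ℝ (⊤ : ℕ∞) (Function.uncurry (u i)))
    (hη : ∀ i, ContDiff ℝ (⊤ : ℕ∞) (Function.uncurry (η i)))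
    (h1 : ∀ (i : Fin N) (x t : ℝ),
      deriv (fun t' => u i x t') t
        = deriv (fun x' => (u i x' t) ^ 2 / 2 + ∑ k, η k x' t) x)
    (h2 : ∀ (i : Fin N) (x t : ℝ),
      deriv (fun t' => η i x t') t = deriv (fun x' => u i x' t * η i x' t) x)
    (L : ℝ → ℝ → ℝ → ℝ)
    (hL : ∀ x t p : ℝ, L x t p = p + ∑ k, η k x t / (p - u k x t))
    (A0 : ℝ → ℝ → ℝ) (hA0 : ∀ x t : ℝ, A0 x t = ∑ k, η k x t) :
    ∀ x t p : ℝ, (∀ k : Fin N, p ≠ u k x t) →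
      pT L x t p = p * pX L x t p - pP L x t p * deriv (fun x' => A0 x' t) x :=
  zakharov_riemann_surface_kinetic_equation_general N u η hu hη h1 h2 L hL A0 hA0
end

section
/- Let a₁, a₂, a₃ : ℝ³ → ℝ be smooth functions of (x, t₁, t₂) satisfying ∂_{t₁} a₁ = ∂_x[a₂ − a₁²], ∂_{t₁} a₂ = ∂_x[a₃ − a₁a₂], and ∂_{t₂} a₁ = ∂_x[a₃ − 2a₁a₂ + a₁³]. Then u := a₁ and w := a₂ − a₁² satisfy the (2+1)-dimensional hydrodynamic type system ∂_{t₁} u = ∂_x w and ∂_{t₂} u = ∂_{t₁} w + u ∂_x w − w ∂_x u. -/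
/-! The first equation is the `t₁`-flow of `a₁` itself. For the second, expand every flux by the
Leibniz rule and substitute the `t₁`-flows of `a₁` and `a₂` into `∂_{t₁}w`: the term `∂ₓa₃` then
appears on both sides and cancels, leaving a polynomial identity in `a₁, a₂` and their
`x`-derivatives. -/

open Real Set

/-- Partial derivative in the first variable `x` of a function of `(x, t₁, t₂)`. -/
noncomputable def dX (f : ℝ → ℝ → ℝ → ℝ) (x t1 t2 : ℝ) : ℝ := deriv (fun x' => f x' t1 t2) x

/-- Partial derivative in the second variable `t₁` of a function of `(x, t₁, t₂)`. -/
noncomputable def dT1 (f : ℝ → ℝ → ℝ → ℝ) (x t1 t2 : ℝ) : ℝ := deriv (fun s => f x s t2) t1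

/-- Partial derivative in the third variable `t₂` of a function of `(x, t₁, t₂)`. -/
noncomputable def dT2 (f : ℝ → ℝ → ℝ → ℝ) (x t1 t2 : ℝ) : ℝ := deriv (fun s => f x t1 s) t2

section Slices

variable {f : ℝ → ℝ → ℝ → ℝ}

theorem Differentiable.hasDerivAt_dX
    (hf : Differentiable ℝ (fun p : ℝ × ℝ × ℝ => f p.1 p.2.1 p.2.2)) (x t1 t2 : ℝ) :
    HasDerivAt (fun x' => f x' t1 t2) (dX f x t1 t2) x :=
  ((hf (x, t1, t2)).comp (f := fun x' => (x', t1, t2)) x (by fun_prop)).hasDerivAt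

theorem Differentiable.hasDerivAt_dT1
    (hf : Differentiable ℝ (fun p : ℝ × ℝ × ℝ => f p.1 p.2.1 p.2.2)) (x t1 t2 : ℝ) :
    HasDerivAt (fun s => f x s t2) (dT1 f x t1 t2) t1 :=
  ((hf (x, t1, t2)).comp (f := fun s => (x, s, t2)) t1 (by fun_prop)).hasDerivAt

end Slices

/-- Eliminating `a₃` from the lowest equations of the hydrodynamic chain
`∂_{t₁}a_k = ∂ₓ[a_{k+1} − a₁a_k]` and its second commuting flow yields the
(2+1)-dimensional system `u_{t₁} = wₓ`, `u_{t₂} = w_{t₁} + u wₓ − w uₓ`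
for `u = a₁`, `w = a₂ − a₁²`. -/
theorem new_2plus1_system_from_chain
    (a1 a2 a3 : ℝ → ℝ → ℝ → ℝ)
    (h1 : ContDiff ℝ (⊤ : ℕ∞) (fun p : ℝ × ℝ × ℝ => a1 p.1 p.2.1 p.2.2))
    (h2 : ContDiff ℝ (⊤ : ℕ∞) (fun p : ℝ × ℝ × ℝ => a2 p.1 p.2.1 p.2.2))
    (h3 : ContDiff ℝ (⊤ : ℕ∞) (fun p : ℝ × ℝ × ℝ => a3 p.1 p.2.1 p.2.2))
    (e1 : ∀ x t1 t2 : ℝ,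
      dT1 a1 x t1 t2 = dX (fun x' s1 s2 => a2 x' s1 s2 - (a1 x' s1 s2) ^ 2) x t1 t2)
    (e2 : ∀ x t1 t2 : ℝ,
      dT1 a2 x t1 t2 = dX (fun x' s1 s2 => a3 x' s1 s2 - a1 x' s1 s2 * a2 x' s1 s2) x t1 t2)
    (e3 : ∀ x t1 t2 : ℝ,
      dT2 a1 x t1 t2
        = dX (fun x' s1 s2 =>
            a3 x' s1 s2 - 2 * a1 x' s1 s2 * a2 x' s1 s2 + (a1 x' s1 s2) ^ 3) x t1 t2)
    (u w : ℝ → ℝ → ℝ → ℝ)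
    (hu : ∀ x t1 t2 : ℝ, u x t1 t2 = a1 x t1 t2)
    (hw : ∀ x t1 t2 : ℝ, w x t1 t2 = a2 x t1 t2 - (a1 x t1 t2) ^ 2) :
    (∀ x t1 t2 : ℝ, dT1 u x t1 t2 = dX w x t1 t2) ∧
    (∀ x t1 t2 : ℝ,
      dT2 u x t1 t2
        = dT1 w x t1 t2 + u x t1 t2 * dX w x t1 t2 - w x t1 t2 * dX u x t1 t2) := by
  obtain rfl : a1 = u := (funext₃ hu).symm
  obtain rfl : w = fun x s1 s2 => a2 x s1 s2 - a1 x s1 s2 ^ 2 := funext₃ hw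
  refine ⟨e1, fun x t1 t2 => ?_⟩
  have d1 := h1.differentiable (by simp)
  have d2 := h2.differentiable (by simp)
  have d3 := h3.differentiable (by simp)
  have a1x := d1.hasDerivAt_dX x t1 t2
  have a2x := d2.hasDerivAt_dX x t1 t2
  have a3x := d3.hasDerivAt_dX x t1 t2
  have a1t := d1.hasDerivAt_dT1 x t1 t2
  have a2t := d2.hasDerivAt_dT1 x t1 t2
  have wx : dX (fun x' s1 s2 => a2 x' s1 s2 - a1 x' s1 s2 ^ 2) x t1 t2
      = dX a2 x t1 t2 - 2 * a1 x t1 t2 * dX a1 x t1 t2 :=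
    (a2x.sub (a1x.pow 2)).deriv.trans (by ring)
  have wt : dT1 (fun x' s1 s2 => a2 x' s1 s2 - a1 x' s1 s2 ^ 2) x t1 t2
      = dT1 a2 x t1 t2 - 2 * a1 x t1 t2 * dT1 a1 x t1 t2 :=
    (a2t.sub (a1t.pow 2)).deriv.trans (by ring)
  have flux2 : dX (fun x' s1 s2 => a3 x' s1 s2 - a1 x' s1 s2 * a2 x' s1 s2) x t1 t2
      = dX a3 x t1 t2 - (dX a1 x t1 t2 * a2 x t1 t2 + a1 x t1 t2 * dX a2 x t1 t2) :=
    (a3x.sub (a1x.mul a2x)).deriv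
  have flux3 : dX (fun x' s1 s2 =>
        a3 x' s1 s2 - 2 * a1 x' s1 s2 * a2 x' s1 s2 + a1 x' s1 s2 ^ 3) x t1 t2
      = dX a3 x t1 t2 - 2 * (dX a1 x t1 t2 * a2 x t1 t2 + a1 x t1 t2 * dX a2 x t1 t2)
        + 3 * a1 x t1 t2 ^ 2 * dX a1 x t1 t2 :=
    ((a3x.sub ((a1x.const_mul 2).mul a2x)).add (a1x.pow 3)).deriv.trans (by ring)
  rw [e3, flux3, wt, e2, flux2, e1, wx]
  ring
end

section
/- Let N ≥ 1, let f₁,…,f_N and ψ₁,…,ψ_N : ℝ → ℝ be smooth with each f_m nowhere zero, fix base points r*₁,…,r*_N ∈ ℝ, and define, for each k ∈ ℤ, c_k : ℝ^N → ℝ by c_k(r) = Σ_{m=1}^N ∫_{r*_m}^{r_m} f_m(s)^{k−1} ψ'_m(s) ds, and define W_i(r) := (1/f_i(r_i)) · exp[Σ_{m=1}^N ∫_{r*_m}^{r_m} ψ'_m(s)/f_m(s) ds]. Then: (a) W_i(r) ∂_i c_k(r) = e^{c₀(r)} ∂_i c_{k−1}(r) for every i, every k ∈ ℤ, and every r ∈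 ℝ^N; consequently (b) if r : ℝ² → ℝ^N is smooth and solves ∂_s r_i = W_i(r) ∂_x r_i for every i, then C_k(x,s) := c_k(r(x,s)) satisfies ∂_s C_k = e^{C₀} ∂_x C_{k−1} for every k ∈ ℤ. -/
open Real Set

/-!
Both parts are first-order calculus. By the fundamental theorem of calculus,
`∂ᵢ c_k = f_i(rᵢ)^{k-1} ψ'_i(rᵢ)`, and the exponent in `Wᵢ` is exactly `c₀`, so
`Wᵢ = e^{c₀}/f_i(rᵢ)` and (a) reduces to `f_i^{k-1} = f_i · f_i^{k-2}`. For (b), the chain rule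
writes `∂ₛ C_k` and `∂ₓ C_{k-1}` as sums over `i` of `∂ᵢ c_k ∂ₛ rᵢ` and `∂ᵢ c_{k-1} ∂ₓ rᵢ`;
the diagonal system turns `∂ₛ rᵢ` into `Wᵢ ∂ₓ rᵢ`, and (a) matches the sums term by term.
-/

section PartialDerivatives

variable {N : ℕ}

theorem pd_eq_fderiv_single {F : (Fin N → ℝ) → ℝ} {r : Fin N → ℝ}
    (hF : DifferentiableAt ℝ F r) (i : Fin N) :
    pd i F r = fderiv ℝ F r (Pi.single i 1) := by
  have hF' : HasFDerivAt F (fderiv ℝ F r) (Function.update r i (r i)) := by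
    rw [Function.update_eq_self]
    exact hF.hasFDerivAt
  exact (hF'.comp_hasDerivAt (r i) (hasDerivAt_update r i (r i))).deriv

theorem fderiv_apply_eq_sum_pd {F : (Fin N → ℝ) → ℝ} {r : Fin N → ℝ}
    (hF : DifferentiableAt ℝ F r) (v : Fin N → ℝ) :
    fderiv ℝ F r v = ∑ i, pd i F r * v i := by
  conv_lhs => rw [← Finset.univ_sum_single v, map_sum]
  refine Finset.sum_congr rfl fun i _ => ?_
  rw [pd_eq_fderiv_single hF, mul_comm, ← smul_eq_mul, ← map_smul, ← Pi.single_smul', smul_eq_mul,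
    mul_one]

theorem deriv_comp_eq_sum_pd {F : (Fin N → ℝ) → ℝ} {γ : ℝ → Fin N → ℝ} {t : ℝ}
    (hF : DifferentiableAt ℝ F (γ t)) (hγ : DifferentiableAt ℝ γ t) :
    deriv (fun t => F (γ t)) t = ∑ i, pd i F (γ t) * deriv (fun t => γ t i) t := by
  rw [← fderiv_apply_eq_sum_pd hF, ← deriv_pi (differentiableAt_pi.mp hγ)]
  exact (hF.hasFDerivAt.comp_hasDerivAt t hγ.hasDerivAt).deriv

theorem pdt_comp_eq_of_diagonal {A B E : (Fin N → ℝ) → ℝ} {W : Fin N → (Fin N → ℝ) → ℝ}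
    (hA : Differentiable ℝ A) (hB : Differentiable ℝ B)
    (hAB : ∀ i rr, W i rr * pd i A rr = E rr * pd i B rr)
    {r : ℝ → ℝ → Fin N → ℝ} (hr : Differentiable ℝ (fun p : ℝ × ℝ => r p.1 p.2)) {x s : ℝ}
    (hsol : ∀ i, pdt (fun x' s' => r x' s' i) x s
      = W i (r x s) * pdx (fun x' s' => r x' s' i) x s) :
    pdt (fun x' s' => A (r x' s')) x s = E (r x s) * pdx (fun x' s' => B (r x' s')) x s := by
  have hrs : DifferentiableAt ℝ (fun s' => r x s') s :=
    (hr _).comp s ((differentiableAt_const x).prodMk differentiableAt_id)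
  have hrx : DifferentiableAt ℝ (fun x' => r x' s) x :=
    (hr _).comp x (differentiableAt_id.prodMk (differentiableAt_const s))
  unfold pdt pdx
  rw [deriv_comp_eq_sum_pd (hA _) hrs, deriv_comp_eq_sum_pd (hB _) hrx, Finset.mul_sum]
  refine Finset.sum_congr rfl fun i _ => ?_
  have hi : deriv (fun s' => r x s' i) s = W i (r x s) * deriv (fun x' => r x' s i) x := hsol i
  rw [hi, ← mul_assoc, mul_comm (pd i A _), hAB, mul_assoc]

end PartialDerivatives

section Primitives

variable {N : ℕ} {g : Fin N → ℝ → ℝ}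

theorem hasFDerivAt_sum_integral (hg : ∀ m, Continuous (g m)) (a r : Fin N → ℝ) :
    HasFDerivAt (fun r : Fin N → ℝ => ∑ m, ∫ s in a m..r m, g m s)
      (∑ m, g m (r m) • (ContinuousLinearMap.proj m : (Fin N → ℝ) →L[ℝ] ℝ)) r := by
  refine HasFDerivAt.fun_sum fun m _ => ?_
  have hFTC : HasDerivAt (fun u => ∫ s in a m..u, g m s) (g m (r m)) (r m) :=
    intervalIntegral.integral_hasDerivAt_right ((hg m).intervalIntegrable _ _)
      ((hg m).stronglyMeasurableAtFilter _ _) (hg m).continuousAt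
  exact hFTC.comp_hasFDerivAt r (hasFDerivAt_apply (𝕜 := ℝ) m r)

theorem differentiable_sum_integral (hg : ∀ m, Continuous (g m)) (a : Fin N → ℝ) :
    Differentiable ℝ (fun r : Fin N → ℝ => ∑ m, ∫ s in a m..r m, g m s) :=
  fun r => (hasFDerivAt_sum_integral hg a r).differentiableAt

theorem pd_sum_integral (hg : ∀ m, Continuous (g m)) (a r : Fin N → ℝ) (i : Fin N) :
    pd i (fun r : Fin N → ℝ => ∑ m, ∫ s in a m..r m, g m s) r = g i (r i) := by
  rw [pd_eq_fderiv_single (differentiable_sum_integral hg a r),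
    (hasFDerivAt_sum_integral hg a r).fderiv]
  simp [Pi.single_apply]

end Primitives

theorem negative_flow_reduction_general
    (N : ℕ) (f ψ : Fin N → ℝ → ℝ)
    (hf : ∀ m, ContDiff ℝ (⊤ : ℕ∞) (f m)) (hψ : ∀ m, ContDiff ℝ (⊤ : ℕ∞) (ψ m))
    (hf0 : ∀ m s, f m s ≠ 0) (r₀ : Fin N → ℝ)
    (c : ℤ → (Fin N → ℝ) → ℝ)
    (hc : ∀ (k : ℤ) (rr : Fin N → ℝ),
      c k rr = ∑ m, ∫ s in (r₀ m)..(rr m), (f m s) ^ (k - 1) * deriv (ψ m) s)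
    (W : Fin N → (Fin N → ℝ) → ℝ)
    (hW : ∀ (i : Fin N) (rr : Fin N → ℝ),
      W i rr = (1 / f i (rr i))
        * Real.exp (∑ m, ∫ s in (r₀ m)..(rr m), deriv (ψ m) s / f m s)) :
    (∀ (i : Fin N) (k : ℤ) (rr : Fin N → ℝ),
      W i rr * pd i (c k) rr = Real.exp (c 0 rr) * pd i (c (k - 1)) rr) ∧
    (∀ r : ℝ → ℝ → Fin N → ℝ,
      ContDiff ℝ (⊤ : ℕ∞) (fun p : ℝ × ℝ => r p.1 p.2) →
      (∀ (x s : ℝ) (i : Fin N),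
        pdt (fun x' s' => r x' s' i) x s
          = W i (r x s) * pdx (fun x' s' => r x' s' i) x s) →
      ∀ (k : ℤ) (x s : ℝ),
        pdt (fun x' s' => c k (r x' s')) x s
          = Real.exp (c 0 (r x s)) * pdx (fun x' s' => c (k - 1) (r x' s')) x s) := by
  set g : ℤ → Fin N → ℝ → ℝ := fun k m s => f m s ^ (k - 1) * deriv (ψ m) s
  have hg : ∀ k m, Continuous (g k m) := fun k m =>
    ((hf m).continuous.zpow₀ _ fun s => Or.inl (hf0 m s)).mul
      ((hψ m).continuous_deriv (by simp))
  have hck : ∀ k, c k = fun rr => ∑ m, ∫ s in r₀ m..rr m, g k m s := fun k => funext (hc k)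
  have hpd : ∀ k i rr, pd i (c k) rr = g k i (rr i) := fun k i rr => by
    rw [hck]
    exact pd_sum_integral (hg k) r₀ rr i
  have hW_eq : ∀ i rr, W i rr = Real.exp (c 0 rr) / f i (rr i) := fun i rr => by
    simp only [hW, hc, zero_sub, zpow_neg_one, ← div_eq_inv_mul, one_div_mul_eq_div]
  have hred : ∀ i k rr, W i rr * pd i (c k) rr = Real.exp (c 0 rr) * pd i (c (k - 1)) rr :=
    fun i k rr => by
      rw [hW_eq, hpd, hpd]
      simp only [g, zpow_sub_one₀ (hf0 i (rr i)) (k - 1)]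
      field_simp [hf0 i (rr i)]
  have hdiff : ∀ k, Differentiable ℝ (c k) := fun k =>
    hck k ▸ differentiable_sum_integral (hg k) r₀
  exact ⟨hred, fun r hr hsol k x s => pdt_comp_eq_of_diagonal (hdiff k) (hdiff (k - 1))
    (hred · k) (hr.differentiable (by simp)) (hsol x s)⟩

/-- (a) The velocities `Wᵢ = (1/fᵢ(rᵢ)) exp[Σ ∫ ψ'_m/f_m]` satisfy the
reduction identity `Wᵢ ∂ᵢ c_k = e^{c₀} ∂ᵢ c_{k−1}` for the moments
`c_k(r) = Σ_m ∫ f_m^{k−1} ψ'_m`, and consequently (b) every solution of the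
diagonal system `∂ₛ rᵢ = Wᵢ(r) ∂ₓ rᵢ` yields moments satisfying the first
negative flow `∂ₛ C_k = e^{C₀} ∂ₓ C_{k−1}` of the hydrodynamic chain. -/
theorem negative_flow_reduction
    (N : ℕ) (hN : 1 ≤ N) (f ψ : Fin N → ℝ → ℝ)
    (hf : ∀ m, ContDiff ℝ (⊤ : ℕ∞) (f m)) (hψ : ∀ m, ContDiff ℝ (⊤ : ℕ∞) (ψ m))
    (hf0 : ∀ m s, f m s ≠ 0) (r₀ : Fin N → ℝ)
    (c : ℤ → (Fin N → ℝ) → ℝ)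
    (hc : ∀ (k : ℤ) (rr : Fin N → ℝ),
      c k rr = ∑ m, ∫ s in (r₀ m)..(rr m), (f m s) ^ (k - 1) * deriv (ψ m) s)
    (W : Fin N → (Fin N → ℝ) → ℝ)
    (hW : ∀ (i : Fin N) (rr : Fin N → ℝ),
      W i rr = (1 / f i (rr i))
        * Real.exp (∑ m, ∫ s in (r₀ m)..(rr m), deriv (ψ m) s / f m s)) :
    (∀ (i : Fin N) (k : ℤ) (rr : Fin N → ℝ),
      W i rr * pd i (c k) rr = Real.exp (c 0 rr) * pd i (c (k - 1)) rr) ∧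
    (∀ r : ℝ → ℝ → Fin N → ℝ,
      ContDiff ℝ (⊤ : ℕ∞) (fun p : ℝ × ℝ => r p.1 p.2) →
      (∀ (x s : ℝ) (i : Fin N),
        pdt (fun x' s' => r x' s' i) x s
          = W i (r x s) * pdx (fun x' s' => r x' s' i) x s) →
      ∀ (k : ℤ) (x s : ℝ),
        pdt (fun x' s' => c k (r x' s')) x s
          = Real.exp (c 0 (r x s)) * pdx (fun x' s' => c (k - 1) (r x' s')) x s) :=
  negative_flow_reduction_general N f ψ hf hψ hf0 r₀ c hc W hW
end

section
/- Let N ≥ 2, let f_i, ψ_i : ℝ → ℝ (i = 1,…,N) be smooth, let γ ∈ ℝ, fix base points r*₁,…,r*_N ∈ ℝ, assume γ − f_m(s) ≠ 0 for all m and all s ∈ ℝ, and define μ_γ : ℝ^N → ℝ by μ_γ(r) := exp[Σ_{m=1}^N ∫_{r*_m}^{r_m} ψ'_m(s)/(γ − f_m(s)) ds]. Then at every point r with f_i(r_i) ≠ f_k(r_k), for all i ≠ k: ∂_i∂_k μ_γ = [ψ'_k(r_k) ∂_i μ_γ − ψ'_i(r_i) ∂_k μ_γ] / (f_i(r_i)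 − f_k(r_k)). -/
open Real Set

noncomputable def expSumIntegral {ι : Type*} [Fintype ι] (a : ι → ℝ) (g : ι → ℝ → ℝ)
    (r : ι → ℝ) : ℝ :=
  exp (∑ m, ∫ t in a m..r m, g m t)

section

variable {ι : Type*} [Fintype ι] [DecidableEq ι]

theorem hasDerivAt_sum_apply_update {φ : ι → ℝ → ℝ} {r : ι → ℝ} {k : ι} {c : ℝ}
    (h : HasDerivAt (φ k) c (r k)) :
    HasDerivAt (fun s => ∑ m, φ m (Function.update r k s m)) c (r k) := by
  have hterm : ∀ m ∈ Finset.univ, HasDerivAt (fun s => φ m (Function.update r k s m))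
      (if m = k then c else 0) (r k) := by
    intro m _
    by_cases hmk : m = k
    · subst hmk
      simpa using h
    · simpa [Function.update_of_ne hmk, hmk] using hasDerivAt_const (r k) (φ m (r m))
  simpa using HasDerivAt.fun_sum hterm

theorem hasDerivAt_expSumIntegral_update {g : ι → ℝ → ℝ} (hg : ∀ m, Continuous (g m))
    (a r : ι → ℝ) (k : ι) :
    HasDerivAt (fun s => expSumIntegral a g (Function.update r k s))
      (g k (r k) * expSumIntegral a g r) (r k) := by
  have hk := ((hg k).integral_hasStrictDerivAt (a k) (r k)).hasDerivAt
  simpa [expSumIntegral, mul_comm] using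
    (hasDerivAt_sum_apply_update (φ := fun m x => ∫ t in a m..x, g m t) hk).exp

end

section

variable {N : ℕ} {a : Fin N → ℝ} {g : Fin N → ℝ → ℝ}

theorem pd_expSumIntegral (hg : ∀ m, Continuous (g m)) (k : Fin N) (r : Fin N → ℝ) :
    pd k (expSumIntegral a g) r = g k (r k) * expSumIntegral a g r :=
  (hasDerivAt_expSumIntegral_update hg a r k).deriv

theorem pd_pd_expSumIntegral (hg : ∀ m, Continuous (g m)) {i k : Fin N} (hik : i ≠ k)
    (r : Fin N → ℝ) :
    pd i (fun r' => pd k (expSumIntegral a g) r') r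
      = g i (r i) * g k (r k) * expSumIntegral a g r := by
  simp only [pd_expSumIntegral hg k]
  unfold pd
  simp only [Function.update_of_ne hik.symm]
  rw [((hasDerivAt_expSumIntegral_update hg a r i).const_mul (g k (r k))).deriv]
  ring

end

theorem basic_solutions_of_linear_system_general
    (N : ℕ) (f ψ : Fin N → ℝ → ℝ)
    (hf : ∀ i, ContDiff ℝ (⊤ : ℕ∞) (f i)) (hψ : ∀ i, ContDiff ℝ (⊤ : ℕ∞) (ψ i))
    (γ : ℝ) (r₀ : Fin N → ℝ)
    (hγ : ∀ (m : Fin N) (s : ℝ), γ - f m s ≠ 0)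
    (μγ : (Fin N → ℝ) → ℝ)
    (hμγ : ∀ rr : Fin N → ℝ,
      μγ rr = Real.exp (∑ m, ∫ s in (r₀ m)..(rr m), deriv (ψ m) s / (γ - f m s))) :
    ∀ (rr : Fin N → ℝ) (i k : Fin N), i ≠ k → f i (rr i) ≠ f k (rr k) →
      pd i (fun r' => pd k μγ r') rr
        = (deriv (ψ k) (rr k) * pd i μγ rr - deriv (ψ i) (rr i) * pd k μγ rr)
            / (f i (rr i) - f k (rr k)) := by
  intro rr i k hik hfik
  set g : Fin N → ℝ → ℝ := fun m s => deriv (ψ m) s / (γ - f m s)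
  have hg : ∀ m, Continuous (g m) := fun m =>
    ((hψ m).continuous_deriv (mod_cast le_top)).div
      (continuous_const.sub (hf m).continuous) (hγ m)
  obtain rfl : μγ = expSumIntegral r₀ g := funext hμγ
  rw [pd_pd_expSumIntegral hg hik, pd_expSumIntegral hg, pd_expSumIntegral hg]
  simp only [g]
  field_simp [hγ i (rr i), hγ k (rr k), sub_ne_zero.mpr hfik]
  ring

/-- The functions `μ_γ(r) = exp[Σ_m ∫_{r*_m}^{r_m} ψ'_m(s)/(γ − f_m(s)) ds]` solve the
Tsarev linear system `∂ᵢ∂_k h = [ψ'_k ∂ᵢ h − ψ'ᵢ ∂_k h]/(fᵢ − f_k)` at every point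
where `fᵢ(rᵢ) ≠ f_k(r_k)`. -/
theorem basic_solutions_of_linear_system
    (N : ℕ) (hN : 2 ≤ N) (f ψ : Fin N → ℝ → ℝ)
    (hf : ∀ i, ContDiff ℝ (⊤ : ℕ∞) (f i)) (hψ : ∀ i, ContDiff ℝ (⊤ : ℕ∞) (ψ i))
    (γ : ℝ) (r₀ : Fin N → ℝ)
    (hγ : ∀ (m : Fin N) (s : ℝ), γ - f m s ≠ 0)
    (μγ : (Fin N → ℝ) → ℝ)
    (hμγ : ∀ rr : Fin N → ℝ,
      μγ rr = Real.exp (∑ m, ∫ s in (r₀ m)..(rr m), deriv (ψ m) s / (γ - f m s))) :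
    ∀ (rr : Fin N → ℝ) (i k : Fin N), i ≠ k → f i (rr i) ≠ f k (rr k) →
      pd i (fun r' => pd k μγ r') rr
        = (deriv (ψ k) (rr k) * pd i μγ rr - deriv (ψ i) (rr i) * pd k μγ rr)
            / (f i (rr i) - f k (rr k)) :=
  basic_solutions_of_linear_system_general N f ψ hf hψ γ r₀ hγ μγ hμγ
end

section
/- Let N ≥ 2, let n be a positive integer, let φ₁,…,φ_N : ℝ → ℝ be smooth, fix constants γ₁,…,γ_N ∈ ℝ, and define h : ℝ^N → ℝ by h(r) := Σ_{k=1}^N ∫_{γ_k}^{r_k} φ_k(s) Π_{m=1}^N (s − r_m)^n ds. Then at every point r with pairwise distinct coordinates, for all i ≠ j: ∂_i∂_j h = (−n/(r_i − r_j)) [∂_i h − ∂_j h]. That is, h solves the N-component Euler–Darboux–Poisson system ∂_{ij}h = (ε/(r^i − r^j))[∂_i h − ∂_j h] with ε = −n. -/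
/-!
Write `P(s) = ∏ₘ (s - rₘ)ⁿ`. Differentiating `h` in `rⱼ` produces a boundary term
`φⱼ(rⱼ) P(rⱼ) = 0` (as `n ≥ 1`) and `∂ⱼh = -n Σₖ ∫ φₖ P / (s - rⱼ)`; the same argument in `rᵢ`
gives `∂ᵢ∂ⱼh = n² Σₖ ∫ φₖ P / ((s - rᵢ)(s - rⱼ))`. The system then follows from
`1/(s - rᵢ) - 1/(s - rⱼ) = (rᵢ - rⱼ)/((s - rᵢ)(s - rⱼ))`. Differentiation under the integral sign
is elementary here: expanding `(s - y)^(q+1)` binomially writes the integral as a polynomial in `y`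
whose coefficients are moments `∫ g(s) sᵐ ds`.
-/

open Real Set

open Finset

theorem sub_pow_eq_sum (u y : ℝ) (q : ℕ) :
    (u - y) ^ q = ∑ m ∈ range (q + 1), q.choose m * (-y) ^ (q - m) * u ^ m := by
  rw [sub_eq_add_neg, add_pow]
  exact sum_congr rfl fun m _ => by ring

theorem intervalIntegral.integral_mul_sub_pow_eq_sum {g : ℝ → ℝ} (hg : Continuous g)
    (a b y : ℝ) (q : ℕ) :
    ∫ u in a..b, g u * (u - y) ^ q
      = ∑ m ∈ range (q + 1), q.choose m * (-y) ^ (q - m) * ∫ u in a..b, g u * u ^ m := by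
  simp_rw [← intervalIntegral.integral_const_mul]
  rw [← intervalIntegral.integral_finsetSum
    (f := fun m u => q.choose m * (-y) ^ (q - m) * (g u * u ^ m))
    fun m _ => (continuous_const.mul (hg.mul (continuous_pow m))).intervalIntegrable a b]
  congr 1 with u
  rw [sub_pow_eq_sum u y q, mul_sum]
  exact sum_congr rfl fun m _ => by ring

theorem hasDerivAt_choose_mul_neg_pow (q m : ℕ) (x : ℝ) :
    HasDerivAt (fun y : ℝ => ((q + 1).choose m : ℝ) * (-y) ^ (q + 1 - m))
      (-(q + 1) * (q.choose m * (-x) ^ (q - m))) x := by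
  have hchoose : ((q + 1).choose m : ℝ) * (q + 1 - m : ℕ) = (q + 1) * q.choose m := by
    exact_mod_cast (Nat.choose_mul_succ_eq q m).symm.trans (mul_comm _ _)
  refine (((hasDerivAt_neg x).pow (q + 1 - m)).const_mul _).congr_deriv ?_
  rw [show q + 1 - m - 1 = q - m by omega]
  linear_combination (-(-x) ^ (q - m)) * hchoose

theorem hasDerivAt_integral_mul_sub_pow {g : ℝ → ℝ} (hg : Continuous g) (a : ℝ)
    {b : ℝ → ℝ} {β x : ℝ} (hb : HasDerivAt b β x) (q : ℕ) :
    HasDerivAt (fun y => ∫ u in a..b y, g u * (u - y) ^ (q + 1))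
      (β * g (b x) * (b x - x) ^ (q + 1) - (q + 1) * ∫ u in a..b x, g u * (u - x) ^ q) x := by
  rw [funext fun y => intervalIntegral.integral_mul_sub_pow_eq_sum hg a (b y) y (q + 1)]
  have hmoment : ∀ m : ℕ, HasDerivAt (fun y => ∫ u in a..b y, g u * u ^ m)
      (g (b x) * b x ^ m * β) x := fun m =>
    ((hg.mul (continuous_pow m)).integral_hasStrictDerivAt a (b x)).hasDerivAt.comp x hb
  refine (HasDerivAt.fun_sum fun m _ =>
    (hasDerivAt_choose_mul_neg_pow q m x).mul (hmoment m)).congr_deriv ?_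
  have hinterior : ∑ m ∈ range (q + 1 + 1),
      -(q + 1) * (q.choose m * (-x) ^ (q - m)) * ∫ u in a..b x, g u * u ^ m
        = -(q + 1) * ∫ u in a..b x, g u * (u - x) ^ q := by
    rw [sum_range_succ, Nat.choose_succ_self, intervalIntegral.integral_mul_sub_pow_eq_sum hg,
      mul_sum]
    simp only [Nat.cast_zero, zero_mul, mul_zero, add_zero, mul_assoc]
  have hboundary : ∑ m ∈ range (q + 1 + 1),
      ((q + 1).choose m : ℝ) * (-x) ^ (q + 1 - m) * (g (b x) * b x ^ m * β)
        = β * g (b x) * (b x - x) ^ (q + 1) := by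
    rw [sub_pow_eq_sum, mul_sum]
    exact sum_congr rfl fun m _ => by ring
  rw [sum_add_distrib, hinterior, hboundary]
  ring

section

variable {ι : Type*} [DecidableEq ι]

theorem prod_sub_update_pow {S : Finset ι} {j : ι} (hj : j ∈ S) (r : ι → ℝ) (s u : ℝ) (n : ℕ) :
    ∏ m ∈ S, (u - Function.update r j s m) ^ n
      = (u - s) ^ n * ∏ m ∈ S.erase j, (u - r m) ^ n := by
  rw [← mul_prod_erase S _ hj, Function.update_self]
  congr 1
  exact prod_congr rfl fun m hm => by rw [Function.update_of_ne (ne_of_mem_erase hm)]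

theorem hasDerivAt_sum_integral_update [Fintype ι] {g : ι → ℝ → ℝ}
    (hg : ∀ k, Continuous (g k)) (γ r : ι → ℝ) (i : ι) (q : ℕ) :
    HasDerivAt (fun s => ∑ k, ∫ u in γ k..Function.update r i s k, g k u * (u - s) ^ (q + 1))
      (-(q + 1) * ∑ k, ∫ u in γ k..r k, g k u * (u - r i) ^ q) (r i) := by
  rw [mul_sum]
  refine HasDerivAt.fun_sum fun k _ => ?_
  have hupdate := hasDerivAt_pi.1 (hasDerivAt_update r i (r i)) k
  refine (hasDerivAt_integral_mul_sub_pow (hg k) (γ k) hupdate q).congr_deriv ?_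
  rw [Function.update_eq_self]
  rcases eq_or_ne k i with rfl | hki
  · simp only [Pi.single_eq_same, sub_self]
    ring
  · simp only [Pi.single_eq_of_ne hki]
    ring

noncomputable def edpDensity [Fintype ι] (φ : ι → ℝ → ℝ) (γ : ι → ℝ) (n : ℕ) (r : ι → ℝ) : ℝ :=
  ∑ k, ∫ s in γ k..r k, φ k s * ∏ m, (s - r m) ^ n

end

section

variable {N : ℕ} {φ : Fin N → ℝ → ℝ} (hφ : ∀ k, Continuous (φ k)) (γ : Fin N → ℝ) (p : ℕ)
include hφ

theorem pd_edpDensity (j : Fin N) (r : Fin N → ℝ) :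
    pd j (edpDensity φ γ (p + 1)) r = -(p + 1) * ∑ k, ∫ u in γ k..r k,
      (φ k u * ∏ m ∈ univ.erase j, (u - r m) ^ (p + 1)) * (u - r j) ^ p := by
  refine Eq.trans ?_ (hasDerivAt_sum_integral_update
    (g := fun k u => φ k u * ∏ m ∈ univ.erase j, (u - r m) ^ (p + 1))
    (fun k => by fun_prop) γ r j p).deriv
  unfold pd
  congr 1 with s
  refine sum_congr rfl fun k _ => intervalIntegral.integral_congr fun u _ => ?_
  simp only [prod_sub_update_pow (mem_univ j)]
  ring

theorem pd_pd_edpDensity {i j : Fin N} (hij : i ≠ j) (r : Fin N → ℝ) :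
    pd i (pd j (edpDensity φ γ (p + 1))) r = (p + 1) ^ 2 * ∑ k, ∫ u in γ k..r k,
      φ k u * (u - r i) ^ p * (u - r j) ^ p
        * ∏ m ∈ (univ.erase j).erase i, (u - r m) ^ (p + 1) := by
  have hfirst : ∀ t, pd j (edpDensity φ γ (p + 1)) (Function.update r i t)
      = -(p + 1) * ∑ k, ∫ u in γ k..Function.update r i t k,
        (φ k u * (u - r j) ^ p * ∏ m ∈ (univ.erase j).erase i, (u - r m) ^ (p + 1))
          * (u - t) ^ (p + 1) := fun t => by
    rw [pd_edpDensity hφ]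
    congr 1
    refine sum_congr rfl fun k _ => intervalIntegral.integral_congr fun u _ => ?_
    rw [prod_sub_update_pow (mem_erase.2 ⟨hij, mem_univ i⟩), Function.update_of_ne hij.symm]
    ring
  have hsecond := (hasDerivAt_sum_integral_update
    (g := fun k u => φ k u * (u - r j) ^ p * ∏ m ∈ (univ.erase j).erase i, (u - r m) ^ (p + 1))
    (fun k => by fun_prop) γ r i p).const_mul (-(p + 1 : ℝ))
  unfold pd at hfirst ⊢
  rw [funext hfirst, hsecond.deriv, ← mul_assoc, neg_mul_neg, ← sq]
  congr 1
  refine sum_congr rfl fun k _ => intervalIntegral.integral_congr fun u _ => ?_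
  ring

theorem pd_edpDensity_sub_pd_edpDensity {i j : Fin N} (hij : i ≠ j) (r : Fin N → ℝ) :
    pd i (edpDensity φ γ (p + 1)) r - pd j (edpDensity φ γ (p + 1)) r
      = -(p + 1) * (r i - r j) * ∑ k, ∫ u in γ k..r k,
      φ k u * (u - r i) ^ p * (u - r j) ^ p
        * ∏ m ∈ (univ.erase j).erase i, (u - r m) ^ (p + 1) := by
  have hcont : ∀ l k, Continuous fun u =>
      (φ k u * ∏ m ∈ univ.erase l, (u - r m) ^ (p + 1)) * (u - r l) ^ p := fun l k => by fun_prop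
  rw [pd_edpDensity hφ, pd_edpDensity hφ, ← mul_sub, ← sum_sub_distrib, mul_assoc]
  congr 1
  rw [mul_sum]
  refine sum_congr rfl fun k _ => ?_
  rw [← intervalIntegral.integral_sub (μ := MeasureTheory.volume)
    ((hcont i k).intervalIntegrable _ _) ((hcont j k).intervalIntegrable _ _),
    ← intervalIntegral.integral_const_mul]
  refine intervalIntegral.integral_congr fun u _ => ?_
  rw [← mul_prod_erase (univ.erase i) _ (mem_erase.2 ⟨hij.symm, mem_univ j⟩),
    ← mul_prod_erase (univ.erase j) _ (mem_erase.2 ⟨hij, mem_univ i⟩), erase_right_comm]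
  ring

end

theorem euler_darboux_poisson_negative_integer_solution_general
    (N : ℕ) (n : ℕ) (hn : 0 < n)
    (φ : Fin N → ℝ → ℝ) (hφ : ∀ k, ContDiff ℝ (⊤ : ℕ∞) (φ k))
    (γ : Fin N → ℝ)
    (h : (Fin N → ℝ) → ℝ)
    (hh : ∀ rr : Fin N → ℝ,
      h rr = ∑ k, ∫ s in (γ k)..(rr k), φ k s * ∏ m, (s - rr m) ^ n) :
    ∀ rr : Fin N → ℝ, (∀ i j : Fin N, i ≠ j → rr i ≠ rr j) →
      ∀ i j : Fin N, i ≠ j →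
        pd i (fun r' => pd j h r') rr
          = (-(n : ℝ) / (rr i - rr j)) * (pd i h rr - pd j h rr) := by
  intro r hdist i j hij
  obtain ⟨p, rfl⟩ : ∃ p, n = p + 1 := Nat.exists_eq_add_one.2 hn
  obtain rfl : h = edpDensity φ γ (p + 1) := funext hh
  have hφc : ∀ k, Continuous (φ k) := fun k => (hφ k).continuous
  have hr : r i - r j ≠ 0 := sub_ne_zero.2 (hdist i j hij)
  rw [pd_pd_edpDensity hφc γ p hij, pd_edpDensity_sub_pd_edpDensity hφc γ p hij]
  field_simp
  push_cast
  ring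

/-- The function `h(r) = Σ_k ∫_{γ_k}^{r_k} φ_k(s) Π_m (s − r_m)^n ds` solves the
N-component Euler–Darboux–Poisson system
`∂ᵢ∂ⱼ h = (−n/(rᵢ − rⱼ))[∂ᵢ h − ∂ⱼ h]` (ε = −n) at points with pairwise
distinct coordinates. -/
theorem euler_darboux_poisson_negative_integer_solution
    (N : ℕ) (hN : 2 ≤ N) (n : ℕ) (hn : 0 < n)
    (φ : Fin N → ℝ → ℝ) (hφ : ∀ k, ContDiff ℝ (⊤ : ℕ∞) (φ k))
    (γ : Fin N → ℝ)
    (h : (Fin N → ℝ) → ℝ)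
    (hh : ∀ rr : Fin N → ℝ,
      h rr = ∑ k, ∫ s in (γ k)..(rr k), φ k s * ∏ m, (s - rr m) ^ n) :
    ∀ rr : Fin N → ℝ, (∀ i j : Fin N, i ≠ j → rr i ≠ rr j) →
      ∀ i j : Fin N, i ≠ j →
        pd i (fun r' => pd j h r') rr
          = (-(n : ℝ) / (rr i - rr j)) * (pd i h rr - pd j h rr) :=
  euler_darboux_poisson_negative_integer_solution_general N n hn φ hφ γ h hh
end
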